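/- arXiv:math/0404202 — 7 statements merged into one kernel-verified Lean document; each statement's English description precedes it below -/
import Mathlib

section
/- Let m ≥ 0 with 2m ∈ ℤ and let λ be a nonempty partition of n whose m-tableau T_m(λ) is residual, with full jump set J. Then Σ_{j ∈ J} (2j + 1) = 2n + m² if m is an integer, and Σ_{j ∈ J} (2j + 1) = 2n + m² − 1/4 if m is a half-integer. -/
open scoped Classical

/-- `lam` is a partition of `n`: a weakly decreasing, eventually-zero function
`ℕ → ℕ` recording the parts (0-indexed), whose sum of parts is `n`. -/
def IsPartitionOf (lam : ℕ → ℕ) (n : ℕ) : Prop :=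
  Antitone lam ∧ ∃ N, (∀ i, N ≤ i → lam i = 0) ∧ ∑ i ∈ Finset.range N, lam i = n

/-- The multiplicity `M_l` of the entry `l` in the `m`-tableau `T_m(λ)`:
the number of boxes `(i,j)` (0-indexed, `j < lam i`) whose entry
`|i - j + m|` equals `l`. -/
noncomputable def Mmult (lam : ℕ → ℕ) (m : ℝ) (l : ℝ) : ℕ :=
  Set.ncard {p : ℕ × ℕ | p.2 < lam p.1 ∧ |(p.1 : ℝ) - (p.2 : ℝ) + m| = l}

/-- The `m`-tableau of `lam` is residual.  The entry values range over `m + ℤ`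
(that is, over `ℤ` when `m ∈ ℤ` and over `ℤ + 1/2` when `m` is a half-integer):
(i) `M_l - M_{l+1} ∈ {0,1}` for all entry-values `l > 0` with `l ≥ m`;
(ii) `M_{l+1} - M_l ∈ {0,1}` for all entry-values `l` with `0 < l ≤ m - 1`;
(iii) when `m` is an integer, `M_0 = ⌊M_1/2⌋` if `m ≥ 1` and
`M_0 = ⌊(M_1+1)/2⌋` if `m = 0`. -/
def Residual (lam : ℕ → ℕ) (m : ℝ) : Prop :=
  (∀ l : ℝ, (∃ c : ℤ, l = m + c) → 0 < l → m ≤ l →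
      Mmult lam m (l + 1) ≤ Mmult lam m l ∧
      Mmult lam m l ≤ Mmult lam m (l + 1) + 1) ∧
  (∀ l : ℝ, (∃ c : ℤ, l = m + c) → 0 < l → l ≤ m - 1 →
      Mmult lam m l ≤ Mmult lam m (l + 1) ∧
      Mmult lam m (l + 1) ≤ Mmult lam m l + 1) ∧
  ((∃ c : ℤ, m = (c : ℝ)) →
      (m = 0 → Mmult lam m 0 = (Mmult lam m 1 + 1) / 2) ∧
      (m ≠ 0 → Mmult lam m 0 = Mmult lam m 1 / 2))

/-- The set `J⁺` of positive jumps of a residual `m`-tableau. -/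
def Jpos (lam : ℕ → ℕ) (m : ℝ) : Set ℝ :=
  {l : ℝ | (∃ c : ℤ, l = m + c) ∧ 0 < l ∧
    ((m ≤ l ∧ Mmult lam m l = Mmult lam m (l + 1) + 1) ∨
     (l ≤ m - 1 ∧ Mmult lam m l = Mmult lam m (l + 1)))}

/-- The full jump set `J`: the positive jumps together with one extra element
(`0` when `m ∈ ℤ`, `-1/2` otherwise, i.e. `m - ⌈m⌉`), added exactly when
`|J⁺| ≢ ⌈m⌉ (mod 2)`. -/
noncomputable def Jfull (lam : ℕ → ℕ) (m : ℝ) : Set ℝ :=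
  if (Set.ncard (Jpos lam m) : ℤ) % 2 = ⌈m⌉ % 2 then Jpos lam m
  else insert (m - (⌈m⌉ : ℝ)) (Jpos lam m)

/-!
Write the positive values of `m + ℤ` as `t + s` with `t : ℕ` and `0 < s ≤ 1`, and let `g t` be the
multiplicity of `t + s`. Residuality says that `g` rises by steps `0` or `1` up to the index `K`
of `m` and then falls by steps `0` or `1`. A positive jump at `t` is a flat step before `K` or a
descent from `K` on, so its indicator is `[t < K] + g t - g (t + 1)`. Against this indicator the
weights `2 (t + s) + 1` sum, by Abel summation, to `K² + 2sK + 2 ∑ g + (2s - 1) g 0`, and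
`∑ g = n - M₀` since `2m ∈ ℤ` makes every entry `0` or some `t + s`. The same indicator gives
`|J⁺| = K + g 0`; in the integer case the rule for `M₀` is exactly the parity correction that the
extra element `0` supplies, and in the half-integer case the extra element `-1/2` has weight `0`.
-/

lemma sum_range_affine_mul_sub {R : Type*} [CommRing R] (a b : R) (f : ℕ → R) (N : ℕ) :
    ∑ t ∈ Finset.range N, (a * t + b) * (f t - f (t + 1)) =
      a * ∑ t ∈ Finset.range N, f t + (b - a) * f 0 - (a * N + b - a) * f N := by
  induction N with
  | zero => simp
  | succ N ih => rw [Finset.sum_range_succ, Finset.sum_range_succ, ih]; push_cast; ring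

lemma sum_range_two_mul_add {R : Type*} [CommRing R] (b : R) (K : ℕ) :
    ∑ t ∈ Finset.range K, (2 * t + b) = K ^ 2 + (b - 1) * K := by
  induction K with
  | zero => simp
  | succ K ih => rw [Finset.sum_range_succ, ih]; push_cast; ring

section UnitSteps

variable {R : Type*} [CommRing R] (g : ℕ → ℕ) (K : ℕ)

def IsUnitStepUnimodal : Prop :=
  (∀ t < K, g t ≤ g (t + 1) ∧ g (t + 1) ≤ g t + 1) ∧
  (∀ t, K ≤ t → g (t + 1) ≤ g t ∧ g t ≤ g (t + 1) + 1)

def IsJump (t : ℕ) : Prop :=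
  if t < K then g t = g (t + 1) else g t = g (t + 1) + 1

noncomputable def jumps (N : ℕ) : Finset ℕ :=
  (Finset.range N).filter (IsJump g K)

variable {g K}

lemma ite_isJump (h : IsUnitStepUnimodal g K) (t : ℕ) :
    (if IsJump g K t then (1 : R) else 0) = (if t < K then 1 else 0) + g t - g (t + 1) := by
  have hz : (if IsJump g K t then (1 : ℤ) else 0) =
      (if t < K then 1 else 0) + g t - g (t + 1) := by
    have := h.1 t
    have := h.2 t
    unfold IsJump
    split_ifs <;> omega
  exact_mod_cast congrArg (Int.cast : ℤ → R) hz

lemma sum_jumps (h : IsUnitStepUnimodal g K) {N : ℕ} (hKN : K ≤ N) (w : ℕ → R) :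
    ∑ t ∈ jumps g K N, w t =
      ∑ t ∈ Finset.range K, w t + ∑ t ∈ Finset.range N, w t * (g t - g (t + 1)) := by
  have hrange : (Finset.range N).filter (· < K) = Finset.range K := by
    ext t; simp only [Finset.mem_filter, Finset.mem_range]; omega
  calc ∑ t ∈ jumps g K N, w t
      = ∑ t ∈ Finset.range N, w t * ((if t < K then 1 else 0) + g t - g (t + 1)) := by
        rw [jumps, Finset.sum_filter]
        refine Finset.sum_congr rfl fun t _ => ?_
        rw [← ite_isJump h, mul_ite, mul_one, mul_zero]
    _ = ∑ t ∈ Finset.range N, (if t < K then w t else 0) +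
          ∑ t ∈ Finset.range N, w t * (g t - g (t + 1)) := by
        rw [← Finset.sum_add_distrib]
        refine Finset.sum_congr rfl fun t _ => ?_
        split_ifs <;> ring
    _ = _ := by rw [← Finset.sum_filter, hrange]

end UnitSteps

-- `entryOffset m`, `peakIndex m` and `profile lam m` are the `s`, `K` and `g` of the sketch above.
noncomputable def entryOffset (m : ℝ) : ℝ := m - ⌈m⌉ + 1

noncomputable def peakIndex (m : ℝ) : ℕ := (⌈m⌉ - 1).toNat

noncomputable def profile (lam : ℕ → ℕ) (m : ℝ) (t : ℕ) : ℕ := Mmult lam m (t + entryOffset m)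

section EntryOffset

variable {m : ℝ}

lemma entryOffset_pos : 0 < entryOffset m := by
  rw [entryOffset]; linarith [Int.ceil_lt_add_one m]

lemma exists_nat_eq_add_entryOffset {l : ℝ} (hl : ∃ c : ℤ, l = m + c) (hpos : 0 < l) :
    ∃ t : ℕ, l = t + entryOffset m := by
  obtain ⟨c, rfl⟩ := hl
  have hlt : -1 < c + ⌈m⌉ - 1 := by
    have : ((-1 : ℤ) : ℝ) < ((c + ⌈m⌉ - 1 : ℤ) : ℝ) := by
      push_cast; linarith [Int.le_ceil m]
    exact_mod_cast this
  refine ⟨(c + ⌈m⌉ - 1).toNat, ?_⟩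
  rw [entryOffset, show (((c + ⌈m⌉ - 1).toNat : ℕ) : ℝ) = ((c + ⌈m⌉ - 1 : ℤ) : ℝ) by
    exact_mod_cast Int.toNat_of_nonneg (by omega)]
  push_cast; ring

lemma nat_add_entryOffset_pos (t : ℕ) : 0 < (t : ℝ) + entryOffset m :=
  add_pos_of_nonneg_of_pos t.cast_nonneg entryOffset_pos

lemma injective_nat_add_entryOffset : Function.Injective fun t : ℕ => (t : ℝ) + entryOffset m :=
  fun a b h => by exact_mod_cast add_right_cancel h

lemma nat_add_entryOffset_mem (t : ℕ) : ∃ c : ℤ, (t : ℝ) + entryOffset m = m + c :=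
  ⟨t - ⌈m⌉ + 1, by rw [entryOffset]; push_cast; ring⟩

lemma le_nat_add_entryOffset_iff (t : ℕ) : m ≤ t + entryOffset m ↔ peakIndex m ≤ t := by
  rw [entryOffset, peakIndex, Int.toNat_le, ← @Int.cast_le ℝ]
  push_cast
  constructor <;> intro h <;> linarith

lemma nat_add_entryOffset_le_iff (t : ℕ) : t + entryOffset m ≤ m - 1 ↔ t < peakIndex m := by
  rw [entryOffset, peakIndex, Int.lt_toNat, ← Int.add_one_le_iff, ← @Int.cast_le ℝ]
  push_cast
  constructor <;> intro h <;> linarith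

end EntryOffset

section Profile

variable {lam : ℕ → ℕ} {m : ℝ}

lemma Mmult_nat_add_entryOffset (t : ℕ) : Mmult lam m (t + entryOffset m) = profile lam m t :=
  rfl

lemma Mmult_nat_add_entryOffset_add_one (t : ℕ) :
    Mmult lam m (t + entryOffset m + 1) = profile lam m (t + 1) := by
  rw [profile]; push_cast; ring_nf

lemma isUnitStepUnimodal_profile (hres : Residual lam m) :
    IsUnitStepUnimodal (profile lam m) (peakIndex m) := by
  constructor
  · intro t ht
    rw [← nat_add_entryOffset_le_iff] at ht
    have := hres.2.1 _ (nat_add_entryOffset_mem t) (nat_add_entryOffset_pos t) ht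
    rwa [Mmult_nat_add_entryOffset_add_one] at this
  · intro t ht
    rw [← le_nat_add_entryOffset_iff] at ht
    have := hres.1 _ (nat_add_entryOffset_mem t) (nat_add_entryOffset_pos t) ht
    rwa [Mmult_nat_add_entryOffset_add_one] at this

lemma Jpos_eq_image_jumps {N : ℕ} (hKN : peakIndex m ≤ N)
    (hN : ∀ t, N ≤ t → profile lam m t = 0) :
    Jpos lam m =
      (fun t : ℕ => (t : ℝ) + entryOffset m) '' jumps (profile lam m) (peakIndex m) N := by
  ext l
  simp only [Jpos, Set.mem_ofPred_eq, Set.mem_image, Finset.mem_coe, jumps, Finset.mem_filter,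
    Finset.mem_range, IsJump]
  constructor
  · rintro ⟨hl, hpos, hjump⟩
    obtain ⟨t, rfl⟩ := exists_nat_eq_add_entryOffset hl hpos
    rw [le_nat_add_entryOffset_iff, nat_add_entryOffset_le_iff, Mmult_nat_add_entryOffset,
      Mmult_nat_add_entryOffset_add_one] at hjump
    refine ⟨t, ⟨?_, ?_⟩, rfl⟩
    · rcases hjump with ⟨hKt, hdrop⟩ | ⟨htK, _⟩
      · by_contra! hNt
        rw [hN t hNt, hN (t + 1) (by omega)] at hdrop
        omega
      · omega
    · rcases hjump with ⟨hKt, hdrop⟩ | ⟨htK, hflat⟩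
      · rwa [if_neg (by omega)]
      · rwa [if_pos htK]
  · rintro ⟨t, ⟨-, hjump⟩, rfl⟩
    refine ⟨nat_add_entryOffset_mem t, nat_add_entryOffset_pos t, ?_⟩
    rw [le_nat_add_entryOffset_iff, nat_add_entryOffset_le_iff, Mmult_nat_add_entryOffset,
      Mmult_nat_add_entryOffset_add_one]
    split_ifs at hjump with htK
    · exact Or.inr ⟨htK, hjump⟩
    · exact Or.inl ⟨not_lt.1 htK, hjump⟩

end Profile

section Boxes

variable {lam : ℕ → ℕ} {m : ℝ} {N : ℕ}

noncomputable def boxes (lam : ℕ → ℕ) (N : ℕ) : Finset (ℕ × ℕ) :=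
  (Finset.range N).biUnion fun i => {i} ×ˢ Finset.range (lam i)

lemma mem_boxes {p : ℕ × ℕ} : p ∈ boxes lam N ↔ p.1 < N ∧ p.2 < lam p.1 := by
  simp only [boxes, Finset.mem_biUnion, Finset.mem_product, Finset.mem_singleton, Finset.mem_range]
  constructor
  · rintro ⟨i, hi, rfl, h⟩; exact ⟨hi, h⟩
  · rintro ⟨h1, h2⟩; exact ⟨p.1, h1, rfl, h2⟩

lemma card_boxes : (boxes lam N).card = ∑ i ∈ Finset.range N, lam i := by
  rw [boxes, Finset.card_biUnion]
  · simp
  · intro i _ j _ hij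
    simp only [Finset.disjoint_left, Finset.mem_product, Finset.mem_singleton]
    rintro p ⟨rfl, _⟩ ⟨rfl, _⟩
    exact hij rfl

lemma Mmult_eq_card_filter (hN : ∀ i, N ≤ i → lam i = 0) (l : ℝ) :
    Mmult lam m l = ((boxes lam N).filter fun p => |(p.1 : ℝ) - p.2 + m| = l).card := by
  rw [Mmult, ← Set.ncard_coe_finset]
  congr 1
  ext p
  simp only [Set.mem_ofPred_eq, Finset.coe_filter, mem_boxes]
  refine ⟨fun ⟨hp, hl⟩ => ⟨⟨?_, hp⟩, hl⟩, fun ⟨⟨_, hp⟩, hl⟩ => ⟨hp, hl⟩⟩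
  by_contra! hNp
  rw [hN p.1 hNp] at hp
  exact Nat.not_lt_zero _ hp

lemma abs_entry_lt (hm0 : 0 ≤ m) (hA : Antitone lam) {p : ℕ × ℕ} (hp : p ∈ boxes lam N) :
    |(p.1 : ℝ) - p.2 + m| < N + lam 0 + m := by
  rw [mem_boxes] at hp
  have h1 : (p.1 : ℝ) + 1 ≤ N := by exact_mod_cast hp.1
  have h2 : (p.2 : ℝ) + 1 ≤ lam 0 := by exact_mod_cast hp.2.trans_le (hA (Nat.zero_le _))
  rw [abs_lt]
  constructor <;> linarith [(p.1.cast_nonneg : (0 : ℝ) ≤ p.1), (p.2.cast_nonneg : (0 : ℝ) ≤ p.2)]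

lemma lt_of_abs_entry_eq (hm0 : 0 ≤ m) (hA : Antitone lam) {p : ℕ × ℕ} (hp : p ∈ boxes lam N)
    {t : ℕ} (ht : |(p.1 : ℝ) - p.2 + m| = t + entryOffset m) :
    t < N + lam 0 + ⌈m⌉.toNat := by
  have hceil : (⌈m⌉ : ℝ) ≤ ⌈m⌉.toNat := by exact_mod_cast Int.self_le_toNat ⌈m⌉
  have hlt := abs_entry_lt hm0 hA hp
  rw [ht, entryOffset] at hlt
  have : (t : ℝ) < ((N + lam 0 + ⌈m⌉.toNat : ℕ) : ℝ) := by push_cast; linarith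
  exact_mod_cast this

lemma profile_eq_zero (hm0 : 0 ≤ m) (hA : Antitone lam) (hN : ∀ i, N ≤ i → lam i = 0) {t : ℕ}
    (ht : N + lam 0 + ⌈m⌉.toNat ≤ t) : profile lam m t = 0 := by
  rw [profile, Mmult_eq_card_filter hN, Finset.card_eq_zero, Finset.filter_eq_empty_iff]
  exact fun p hp hpt => (lt_of_abs_entry_eq hm0 hA hp hpt).not_ge ht

lemma abs_mem_add_int (h2m : ∃ c : ℤ, 2 * m = c) {y : ℝ} (hy : ∃ c : ℤ, y = m + c) :
    ∃ c : ℤ, |y| = m + c := by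
  obtain ⟨c, hc⟩ := h2m
  obtain ⟨d, rfl⟩ := hy
  rcases abs_choice (m + d) with h | h
  · exact ⟨d, h⟩
  · exact ⟨-c - d, by rw [h]; push_cast; linarith⟩

lemma card_eq_Mmult_zero_add_sum_profile (hm0 : 0 ≤ m) (h2m : ∃ c : ℤ, 2 * m = c)
    {n : ℕ} (hA : Antitone lam) (hN : ∀ i, N ≤ i → lam i = 0)
    (hn : ∑ i ∈ Finset.range N, lam i = n) :
    n = Mmult lam m 0 + ∑ t ∈ Finset.range (N + lam 0 + ⌈m⌉.toNat), profile lam m t := by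
  set T := N + lam 0 + ⌈m⌉.toNat
  have hzero : (0 : ℝ) ∉ (Finset.range T).image fun t : ℕ => (t : ℝ) + entryOffset m := by
    simp only [Finset.mem_image, not_exists, not_and]
    exact fun t _ h => (nat_add_entryOffset_pos t).ne' h
  have hmaps : Set.MapsTo (fun p : ℕ × ℕ => |(p.1 : ℝ) - p.2 + m|) (boxes lam N)
      (insert 0 ((Finset.range T).image fun t : ℕ => (t : ℝ) + entryOffset m) : Finset ℝ) := by
    intro p hp
    simp only [Finset.coe_insert, Finset.coe_image, Finset.coe_range, Set.mem_insert_iff,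
      Set.mem_image, Set.mem_Iio]
    rcases (abs_nonneg ((p.1 : ℝ) - p.2 + m)).eq_or_lt with h | h
    · exact Or.inl h.symm
    · obtain ⟨t, ht⟩ := exists_nat_eq_add_entryOffset
        (abs_mem_add_int h2m ⟨p.1 - p.2, by push_cast; ring⟩) h
      exact Or.inr ⟨t, lt_of_abs_entry_eq hm0 hA hp ht, ht.symm⟩
  rw [← hn, ← card_boxes, Finset.card_eq_sum_card_fiberwise hmaps, Finset.sum_insert hzero,
    Finset.sum_image fun a _ b _ h => injective_nat_add_entryOffset h]
  simp only [profile, Mmult_eq_card_filter hN]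

lemma Mmult_zero_of_not_int (hm : ¬ ∃ c : ℤ, m = c) : Mmult lam m 0 = 0 := by
  have hempty : {p : ℕ × ℕ | p.2 < lam p.1 ∧ |(p.1 : ℝ) - p.2 + m| = 0} = ∅ := by
    ext p
    simp only [Set.mem_ofPred_eq, abs_eq_zero, Set.mem_empty_iff_false, iff_false, not_and]
    intro _ h
    exact hm ⟨p.2 - p.1, by push_cast; linarith⟩
  rw [Mmult, hempty, Set.ncard_empty]

end Boxes

section JumpSet

variable {lam : ℕ → ℕ} {m : ℝ} {N : ℕ}

lemma Jpos_eq_image_jumps_of_partition (hm0 : 0 ≤ m) (hA : Antitone lam)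
    (hN : ∀ i, N ≤ i → lam i = 0) :
    Jpos lam m = (fun t : ℕ => (t : ℝ) + entryOffset m) ''
      jumps (profile lam m) (peakIndex m) (N + lam 0 + ⌈m⌉.toNat) :=
  Jpos_eq_image_jumps (by rw [peakIndex]; omega) fun _ => profile_eq_zero hm0 hA hN

lemma Jpos_finite (hm0 : 0 ≤ m) (hA : Antitone lam) (hN : ∀ i, N ≤ i → lam i = 0) :
    (Jpos lam m).Finite := by
  rw [Jpos_eq_image_jumps_of_partition hm0 hA hN]
  exact (Finset.finite_toSet _).image _

lemma ncard_Jpos (hm0 : 0 ≤ m) (hA : Antitone lam) (hN : ∀ i, N ≤ i → lam i = 0)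
    (hres : Residual lam m) :
    ((Jpos lam m).ncard : ℤ) = peakIndex m + profile lam m 0 := by
  rw [Jpos_eq_image_jumps_of_partition hm0 hA hN,
    Set.ncard_image_of_injective _ injective_nat_add_entryOffset, Set.ncard_coe_finset,
    Finset.card_eq_sum_ones, Nat.cast_sum,
    sum_jumps (isUnitStepUnimodal_profile hres) (by rw [peakIndex]; omega), Nat.cast_one,
    Finset.sum_const, Finset.card_range, nsmul_one]
  simp only [one_mul]
  rw [Finset.sum_range_sub', profile_eq_zero hm0 hA hN le_rfl, Nat.cast_zero, sub_zero]

lemma finsum_Jpos (hm0 : 0 ≤ m) (h2m : ∃ c : ℤ, 2 * m = c) {n : ℕ} (hA : Antitone lam)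
    (hN : ∀ i, N ≤ i → lam i = 0) (hn : ∑ i ∈ Finset.range N, lam i = n)
    (hres : Residual lam m) :
    ∑ᶠ j ∈ Jpos lam m, (2 * j + 1) = 2 * ((n : ℝ) - Mmult lam m 0) + peakIndex m ^ 2 +
      2 * entryOffset m * peakIndex m + (2 * entryOffset m - 1) * profile lam m 0 := by
  have hcount := card_eq_Mmult_zero_add_sum_profile hm0 h2m hA hN hn
  rw [Jpos_eq_image_jumps_of_partition hm0 hA hN,
    finsum_mem_image injective_nat_add_entryOffset.injOn, finsum_mem_coe_finset,
    sum_jumps (isUnitStepUnimodal_profile hres) (by rw [peakIndex]; omega)]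
  simp only [show ∀ t : ℕ, 2 * ((t : ℝ) + entryOffset m) + 1 = 2 * t + (2 * entryOffset m + 1)
    from fun t => by ring]
  rw [sum_range_two_mul_add, sum_range_affine_mul_sub, profile_eq_zero hm0 hA hN le_rfl, hcount]
  push_cast
  ring

lemma finsum_Jfull (hfin : (Jpos lam m).Finite) :
    ∑ᶠ j ∈ Jfull lam m, (2 * j + 1) = ∑ᶠ j ∈ Jpos lam m, (2 * j + 1) +
      if ((Jpos lam m).ncard : ℤ) % 2 = ⌈m⌉ % 2 then 0 else 2 * (m - ⌈m⌉) + 1 := by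
  have hnotin : m - ⌈m⌉ ∉ Jpos lam m := fun h => by
    linarith [h.2.1, Int.le_ceil m]
  rw [Jfull]
  split_ifs
  · rw [add_zero]
  · rw [finsum_mem_insert _ hnotin hfin, add_comm]

end JumpSet

theorem finsum_Jfull_of_nat {lam : ℕ → ℕ} {n : ℕ} (k : ℕ) (hlam : IsPartitionOf lam n)
    (hres : Residual lam k) :
    ∑ᶠ j ∈ Jfull lam k, (2 * j + 1) = 2 * (n : ℝ) + (k : ℝ) ^ 2 := by
  obtain ⟨hA, N, hN, hn⟩ := hlam
  have hm0 : (0 : ℝ) ≤ k := k.cast_nonneg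
  have hceil : ⌈(k : ℝ)⌉ = k := Int.ceil_natCast k
  have hs : entryOffset k = 1 := by rw [entryOffset, hceil]; push_cast; ring
  have hK : peakIndex k = k - 1 := by rw [peakIndex, hceil]; omega
  have hg0 : profile lam k 0 = Mmult lam k 1 := by rw [profile, hs, Nat.cast_zero, zero_add]
  have hcard := ncard_Jpos hm0 hA hN hres
  rw [hK, hg0] at hcard
  obtain ⟨hzero, hpos⟩ := hres.2.2 ⟨k, rfl⟩
  rw [finsum_Jfull (Jpos_finite hm0 hA hN),
    finsum_Jpos hm0 ⟨2 * k, by push_cast; ring⟩ hA hN hn hres, hceil, hs, hK, hg0]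
  generalize Mmult lam k 0 = M₀ at *
  generalize Mmult lam k 1 = M₁ at *
  generalize (Jpos lam k).ncard = c at *
  rcases k with _ | k
  · have hM₀ := hzero Nat.cast_zero
    push_cast
    split_ifs with hpar
    · linarith [show (2 * M₀ : ℝ) = M₁ by norm_cast; omega]
    · linarith [show (2 * M₀ : ℝ) = M₁ + 1 by norm_cast; omega]
  · have hM₀ := hpos (Nat.cast_ne_zero.2 k.succ_ne_zero)
    push_cast
    split_ifs with hpar
    · linarith [show (2 * M₀ : ℝ) + 1 = M₁ by norm_cast; omega]
    · linarith [show (2 * M₀ : ℝ) = M₁ by norm_cast; omega]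

lemma exists_nat_eq_or_eq_add_half {m : ℝ} (hm0 : 0 ≤ m) (h2m : ∃ c : ℤ, 2 * m = c) :
    ∃ k : ℕ, m = k ∨ m = k + 1 / 2 := by
  obtain ⟨c, hc⟩ := h2m
  have hc0 : 0 ≤ c := by exact_mod_cast (hc ▸ by positivity : (0 : ℝ) ≤ c)
  refine ⟨(c / 2).toNat, ?_⟩
  rcases Int.emod_two_eq_zero_or_one c with hpar | hpar
  · have h : c = 2 * (c / 2).toNat := by omega
    rify at h
    left; linarith
  · have h : c = 2 * (c / 2).toNat + 1 := by omega
    rify at h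
    right; linarith

lemma not_exists_int_eq_nat_add_half (k : ℕ) : ¬ ∃ c : ℤ, (k : ℝ) + 1 / 2 = c := by
  rintro ⟨c, hc⟩
  have h : 2 * c = 2 * k + 1 := by
    rify
    linarith
  omega

theorem finsum_Jfull_of_nat_add_half {lam : ℕ → ℕ} {n : ℕ} (k : ℕ) (hlam : IsPartitionOf lam n)
    (hres : Residual lam (k + 1 / 2)) :
    ∑ᶠ j ∈ Jfull lam (k + 1 / 2), (2 * j + 1) = 2 * (n : ℝ) + ((k : ℝ) + 1 / 2) ^ 2 - 1 / 4 := by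
  obtain ⟨hA, N, hN, hn⟩ := hlam
  have hm0 : (0 : ℝ) ≤ k + 1 / 2 := by positivity
  have hceil : ⌈(k : ℝ) + 1 / 2⌉ = k + 1 := by
    rw [Int.ceil_eq_iff]; push_cast; constructor <;> linarith
  have hs : entryOffset (k + 1 / 2) = 1 / 2 := by rw [entryOffset, hceil]; push_cast; ring
  have hK : peakIndex (k + 1 / 2) = k := by rw [peakIndex, hceil]; omega
  rw [finsum_Jfull (Jpos_finite hm0 hA hN),
    finsum_Jpos hm0 ⟨2 * k + 1, by push_cast; ring⟩ hA hN hn hres, hceil, hs, hK,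
    Mmult_zero_of_not_int (not_exists_int_eq_nat_add_half k)]
  split_ifs <;> push_cast <;> ring

theorem stmt7_general (n : ℕ) (m : ℝ) (hm0 : 0 ≤ m)
    (h2m : ∃ c : ℤ, 2 * m = (c : ℝ))
    (lam : ℕ → ℕ) (hlam : IsPartitionOf lam n) (hres : Residual lam m) :
    ((∃ c : ℤ, m = (c : ℝ)) →
      ∑ᶠ j ∈ Jfull lam m, (2 * j + 1) = 2 * (n : ℝ) + m ^ 2) ∧
    ((¬ ∃ c : ℤ, m = (c : ℝ)) →
      ∑ᶠ j ∈ Jfull lam m, (2 * j + 1) = 2 * (n : ℝ) + m ^ 2 - 1/4) := by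
  obtain ⟨k, rfl | rfl⟩ := exists_nat_eq_or_eq_add_half hm0 h2m
  · exact ⟨fun _ => finsum_Jfull_of_nat k hlam hres, fun hm => absurd ⟨k, rfl⟩ hm⟩
  · exact ⟨fun hm => absurd hm (not_exists_int_eq_nat_add_half k),
      fun _ => finsum_Jfull_of_nat_add_half k hlam hres⟩

/-- for `m ≥ 0` with `2m ∈ ℤ` and a nonempty partition `lam` of
`n` whose `m`-tableau is residual, the full jump set `J` satisfies
`Σ_{j ∈ J} (2j + 1) = 2n + m²` when `m ∈ ℤ`, and `= 2n + m² - 1/4` when `m`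
is a half-integer. -/
theorem stmt7 (n : ℕ) (hn : 1 ≤ n) (m : ℝ) (hm0 : 0 ≤ m)
    (h2m : ∃ c : ℤ, 2 * m = (c : ℝ))
    (lam : ℕ → ℕ) (hlam : IsPartitionOf lam n) (hres : Residual lam m) :
    ((∃ c : ℤ, m = (c : ℝ)) →
      ∑ᶠ j ∈ Jfull lam m, (2 * j + 1) = 2 * (n : ℝ) + m ^ 2) ∧
    ((¬ ∃ c : ℤ, m = (c : ℝ)) →
      ∑ᶠ j ∈ Jfull lam m, (2 * j + 1) = 2 * (n : ℝ) + m ^ 2 - 1/4) :=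
  stmt7_general n m hm0 h2m lam hlam hres
end

section
/- Let λ and μ be partitions of the same integer N with λ ⊵ μ in the dominance order, and let κ be any partition. Then λ ∪ κ ⊵ μ ∪ κ, and consequently n(λ ∪ κ) ≤ n(μ ∪ κ), where λ ∪ κ denotes the partition whose multiset of parts is the union of the multisets of parts of λ and κ, and n(λ) = Σ_i (i − 1)λ_i. -/
open scoped Classical

/-- `lam` is a partition (of unspecified weight). -/
def IsPartitionFun (lam : ℕ → ℕ) : Prop :=
  Antitone lam ∧ ∃ N, ∀ i, N ≤ i → lam i = 0

/-- The multiplicity of the value `v` as a part of `lam`. -/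
noncomputable def partCount (lam : ℕ → ℕ) (v : ℕ) : ℕ :=
  Set.ncard {i : ℕ | lam i = v}

/-- `nu` is the union `lam ∪ kap`: its multiset of parts is the union of the
multisets of parts of `lam` and `kap`. -/
def IsUnionOf (nu lam kap : ℕ → ℕ) : Prop :=
  ∀ v : ℕ, 1 ≤ v → partCount nu v = partCount lam v + partCount kap v

/-- `n(λ) = Σ_i (i-1) λ_i` (1-indexed). -/
noncomputable def nVal (lam : ℕ → ℕ) : ℕ :=
  ∑ᶠ i : ℕ, i * lam i

/-!
Pass to conjugate partitions `λ'_v = #{i | v ≤ λ_i}`: the sum of the `k` largest parts of `λ` is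
`∑_v min k λ'_v`, and `(λ ∪ κ)' = λ' + κ'`. Splitting `k = a + b` suitably, the `k` largest parts
of `μ ∪ κ` sum to at most the `a` largest of `μ` plus the `b` largest of `κ`; by dominance this is
at most the same for `λ` and `κ`, which is at most the sum of the `k` largest parts of `λ ∪ κ`.
As both unions have the same size, Abel summation turns this dominance into `n(λ ∪ κ) ≤ n(μ ∪ κ)`.
-/

open Finset Filter

structure IsPartitionInBox (f : ℕ → ℕ) (B V : ℕ) : Prop where
  antitone : Antitone f
  eq_zero : ∀ i, B ≤ i → f i = 0
  le : ∀ i, f i ≤ V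

lemma IsPartitionOf.isPartitionFun {f : ℕ → ℕ} {n : ℕ} (h : IsPartitionOf f n) :
    IsPartitionFun f :=
  ⟨h.1, h.2.imp fun _ h => h.1⟩

lemma IsPartitionOf.sum_range_eq {f : ℕ → ℕ} {n B : ℕ} (h : IsPartitionOf f n)
    (hB : ∀ i, B ≤ i → f i = 0) : ∑ i ∈ range B, f i = n := by
  obtain ⟨-, N, hN, rfl⟩ := h
  rw [← eventually_constant_sum hB (le_max_left B N), eventually_constant_sum hN (le_max_right B N)]

lemma IsPartitionFun.eventually_isPartitionInBox {f : ℕ → ℕ} (h : IsPartitionFun f) :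
    ∀ᶠ B in atTop, IsPartitionInBox f B B := by
  obtain ⟨hf, N, hN⟩ := h
  filter_upwards [eventually_ge_atTop N, eventually_ge_atTop (f 0)] with B hNB hf0B
  exact ⟨hf, fun i hi => hN i (hNB.trans hi), fun i => (hf (Nat.zero_le i)).trans hf0B⟩

lemma nVal_eq_sum_range {f : ℕ → ℕ} {B : ℕ} (hB : ∀ i, B ≤ i → f i = 0) :
    nVal f = ∑ i ∈ range B, i * f i := by
  refine finsum_eq_sum_of_support_subset _ fun i hi => ?_
  by_contra hiB
  simp_all

/-- `λ'_v`, counting only the first `B` parts. -/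
noncomputable def conjugate (f : ℕ → ℕ) (B v : ℕ) : ℕ :=
  #{i ∈ range B | v ≤ f i}

section Conjugate

variable {f : ℕ → ℕ} {B V : ℕ}

lemma conjugate_antitone (f : ℕ → ℕ) (B : ℕ) : Antitone (conjugate f B) :=
  fun _ _ hvw => card_le_card fun _ => by
    simp only [mem_filter]
    exact And.imp_right hvw.trans

lemma conjugate_le (f : ℕ → ℕ) (B v : ℕ) : conjugate f B v ≤ B :=
  (card_filter_le _ _).trans (card_range B).le

lemma IsPartitionInBox.conjugate_eq_zero (hf : IsPartitionInBox f B V) {v : ℕ} (hv : V < v) :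
    conjugate f B v = 0 := by
  rw [conjugate, card_eq_zero, filter_eq_empty_iff]
  have := hf.le
  grind

lemma IsPartitionInBox.lt_conjugate_iff (hf : IsPartitionInBox f B V) {v : ℕ} (hv : 1 ≤ v)
    (i : ℕ) : i < conjugate f B v ↔ v ≤ f i := by
  have hex : ∃ j, f j < v := ⟨B, by rw [hf.eq_zero B le_rfl]; omega⟩
  have hfind : ∀ j, v ≤ f j ↔ j < Nat.find hex := fun j =>
    ⟨fun hj => by_contra fun hfj => (hf.antitone (not_lt.1 hfj)).not_gt
        ((Nat.find_spec hex).trans_le hj),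
      fun hj => not_lt.1 (Nat.find_min hex hj)⟩
  have hfindB : Nat.find hex ≤ B := Nat.find_min' hex (by rw [hf.eq_zero B le_rfl]; omega)
  have hrange : {j ∈ range B | v ≤ f j} = range (Nat.find hex) := by
    ext j
    simp only [mem_filter, mem_range, hfind]
    omega
  rw [conjugate, hrange, card_range, hfind]

lemma IsPartitionInBox.sum_range_eq_sum_min_conjugate (hf : IsPartitionInBox f B V) (k : ℕ) :
    ∑ i ∈ range k, f i = ∑ v ∈ Icc 1 V, min k (conjugate f B v) := by
  have hcol : ∀ i, f i = #{v ∈ Icc 1 V | v ≤ f i} := fun i => by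
    have : {v ∈ Icc 1 V | v ≤ f i} = Icc 1 (f i) := by
      ext v
      simp only [mem_filter, mem_Icc]
      have := hf.le i
      omega
    rw [this, Nat.card_Icc, Nat.add_sub_cancel]
  have hrow : ∀ v ∈ Icc 1 V, #{i ∈ range k | v ≤ f i} = min k (conjugate f B v) := by
    intro v hv
    have : {i ∈ range k | v ≤ f i} = range (min k (conjugate f B v)) := by
      ext i
      simp only [mem_filter, mem_range, lt_min_iff, hf.lt_conjugate_iff (mem_Icc.1 hv).1]
    rw [this, card_range]
  calc ∑ i ∈ range k, f i = ∑ i ∈ range k, ∑ v ∈ Icc 1 V, if v ≤ f i then 1 else 0 := by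
        simp only [← card_filter, ← hcol]
    _ = ∑ v ∈ Icc 1 V, ∑ i ∈ range k, if v ≤ f i then 1 else 0 := sum_comm
    _ = ∑ v ∈ Icc 1 V, min k (conjugate f B v) := by
        simp only [← card_filter]
        exact sum_congr rfl hrow

lemma partCount_eq_card_filter (hB : ∀ i, B ≤ i → f i = 0) {w : ℕ} (hw : 1 ≤ w) :
    partCount f w = #{i ∈ range B | f i = w} := by
  rw [partCount, ← Set.ncard_coe_finset]
  congr 1
  ext i
  have := hB i
  simp only [Set.mem_ofPred_eq, coe_filter, mem_range]
  omega

lemma IsPartitionInBox.conjugate_eq_sum_partCount (hf : IsPartitionInBox f B V) {v : ℕ}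
    (hv : 1 ≤ v) : conjugate f B v = ∑ w ∈ Icc v V, partCount f w := by
  rw [conjugate, card_eq_sum_card_fiberwise (f := f) (t := Icc v V)
    fun i hi => mem_Icc.2 ⟨(mem_filter.1 hi).2, hf.le i⟩]
  refine sum_congr rfl fun w hw => ?_
  rw [partCount_eq_card_filter hf.eq_zero (hv.trans (mem_Icc.1 hw).1), filter_filter]
  congr 1
  exact filter_congr fun i _ => by grind

lemma IsUnionOf.conjugate_eq {nu lam kap : ℕ → ℕ} (hu : IsUnionOf nu lam kap)
    (hnu : IsPartitionInBox nu B V) (hlam : IsPartitionInBox lam B V)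
    (hkap : IsPartitionInBox kap B V) {v : ℕ} (hv : 1 ≤ v) :
    conjugate nu B v = conjugate lam B v + conjugate kap B v := by
  rw [hnu.conjugate_eq_sum_partCount hv, hlam.conjugate_eq_sum_partCount hv,
    hkap.conjugate_eq_sum_partCount hv, ← sum_add_distrib]
  exact sum_congr rfl fun w hw => hu w (hv.trans (mem_Icc.1 hw).1)

end Conjugate

/-- With `w` the first index where `X w + Y w ≤ k`, any `a` between `X w` and `k - Y (w - 1)`
works, and such an `a` exists by minimality of `w`. -/
lemma exists_add_eq_forall_min_add_le {X Y : ℕ → ℕ} (hX : Antitone X) (hY : Antitone Y) {k : ℕ}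
    (hk : ∃ v, X v + Y v ≤ k) :
    ∃ a b, a + b = k ∧ ∀ v, min k (X v + Y v) ≤ min a (X v) + min b (Y v) := by
  set w := Nat.find hk
  have hwk : X w + Y w ≤ k := Nat.find_spec hk
  have hmin : ∀ u < w, k < X u + Y u := fun u hu => not_le.1 (Nat.find_min hk hu)
  refine ⟨max (X w) (k - Y (w - 1)), k - max (X w) (k - Y (w - 1)), by omega, fun v => ?_⟩
  rcases le_or_gt w v with hwv | hvw
  · have := hX hwv
    have := hY hwv
    have := hY (Nat.sub_le w 1)
    omega
  · have := hX (Nat.le_sub_one_of_lt hvw)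
    have := hY (Nat.le_sub_one_of_lt hvw)
    have := hX (Nat.sub_le w 1)
    have := hmin (w - 1) (by omega)
    omega

section Union

variable {nu lam kap : ℕ → ℕ} {B V : ℕ}

lemma IsUnionOf.exists_sum_range_le (hu : IsUnionOf nu lam kap)
    (hnu : IsPartitionInBox nu B V) (hlam : IsPartitionInBox lam B V)
    (hkap : IsPartitionInBox kap B V) (k : ℕ) :
    ∃ a b, a + b = k ∧ ∑ i ∈ range k, nu i ≤ ∑ i ∈ range a, lam i + ∑ i ∈ range b, kap i := by
  obtain ⟨a, b, hab, hsplit⟩ := exists_add_eq_forall_min_add_le (conjugate_antitone lam B)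
    (conjugate_antitone kap B) (k := k) ⟨V + 1, by
      rw [hlam.conjugate_eq_zero V.lt_succ_self, hkap.conjugate_eq_zero V.lt_succ_self]; omega⟩
  refine ⟨a, b, hab, ?_⟩
  rw [hnu.sum_range_eq_sum_min_conjugate, hlam.sum_range_eq_sum_min_conjugate,
    hkap.sum_range_eq_sum_min_conjugate, ← sum_add_distrib]
  refine sum_le_sum fun v hv => ?_
  rw [hu.conjugate_eq hnu hlam hkap (mem_Icc.1 hv).1]
  exact hsplit v

lemma IsUnionOf.sum_range_add_le (hu : IsUnionOf nu lam kap)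
    (hnu : IsPartitionInBox nu B V) (hlam : IsPartitionInBox lam B V)
    (hkap : IsPartitionInBox kap B V) (a b : ℕ) :
    ∑ i ∈ range a, lam i + ∑ i ∈ range b, kap i ≤ ∑ i ∈ range (a + b), nu i := by
  rw [hnu.sum_range_eq_sum_min_conjugate, hlam.sum_range_eq_sum_min_conjugate,
    hkap.sum_range_eq_sum_min_conjugate, ← sum_add_distrib]
  refine sum_le_sum fun v hv => ?_
  rw [hu.conjugate_eq hnu hlam hkap (mem_Icc.1 hv).1]
  omega

lemma IsUnionOf.sum_range_eq (hu : IsUnionOf nu lam kap)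
    (hnu : IsPartitionInBox nu B V) (hlam : IsPartitionInBox lam B V)
    (hkap : IsPartitionInBox kap B V) :
    ∑ i ∈ range B, nu i = ∑ i ∈ range B, lam i + ∑ i ∈ range B, kap i := by
  rw [hnu.sum_range_eq_sum_min_conjugate, hlam.sum_range_eq_sum_min_conjugate,
    hkap.sum_range_eq_sum_min_conjugate, ← sum_add_distrib]
  refine sum_congr rfl fun v hv => ?_
  have := conjugate_le nu B v
  rw [hu.conjugate_eq hnu hlam hkap (mem_Icc.1 hv).1] at this ⊢
  omega

end Union

lemma sum_range_mul_add_sum_range_sum_range (f : ℕ → ℕ) (K : ℕ) :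
    ∑ i ∈ range K, i * f i + ∑ k ∈ range K, ∑ i ∈ range (k + 1), f i
      = K * ∑ i ∈ range K, f i := by
  induction K with
  | zero => simp
  | succ K ih =>
    rw [sum_range_succ (fun i => i * f i), sum_range_succ (fun k => ∑ i ∈ range (k + 1), f i),
      sum_range_succ f]
    linear_combination ih

/-- Abel summation: `n(f) = B |f| - ∑_{k < B} (f_0 + ⋯ + f_k)`. -/
lemma nVal_le_nVal_of_dominates {f g : ℕ → ℕ} {B : ℕ} (hf : ∀ i, B ≤ i → f i = 0)
    (hg : ∀ i, B ≤ i → g i = 0) (hsum : ∑ i ∈ range B, f i = ∑ i ∈ range B, g i)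
    (hdom : ∀ k, ∑ i ∈ range k, g i ≤ ∑ i ∈ range k, f i) : nVal f ≤ nVal g := by
  have habel := (sum_range_mul_add_sum_range_sum_range f B).trans
    (hsum ▸ (sum_range_mul_add_sum_range_sum_range g B).symm)
  have hpartial : ∑ k ∈ range B, ∑ i ∈ range (k + 1), g i
      ≤ ∑ k ∈ range B, ∑ i ∈ range (k + 1), f i := sum_le_sum fun k _ => hdom (k + 1)
  rw [nVal_eq_sum_range hf, nVal_eq_sum_range hg]
  omega

/-- if `lam ⊵ mu` are partitions of the same integer `N` and
`kap` is any partition, then `lam ∪ kap ⊵ mu ∪ kap` and consequently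
`n(lam ∪ kap) ≤ n(mu ∪ kap)`. -/
theorem stmt9 (N : ℕ) (lam mu kap nul num : ℕ → ℕ)
    (hlam : IsPartitionOf lam N) (hmu : IsPartitionOf mu N)
    (hkap : IsPartitionFun kap)
    (hnul : IsPartitionFun nul) (hnum : IsPartitionFun num)
    (hul : IsUnionOf nul lam kap) (hum : IsUnionOf num mu kap)
    (hdom : ∀ k, ∑ i ∈ Finset.range k, mu i ≤ ∑ i ∈ Finset.range k, lam i) :
    (∀ k, ∑ i ∈ Finset.range k, num i ≤ ∑ i ∈ Finset.range k, nul i) ∧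
    nVal nul ≤ nVal num := by
  obtain ⟨B, hlB, hmB, hkB, hnlB, hnmB⟩ :=
    (hlam.isPartitionFun.eventually_isPartitionInBox.and <|
      hmu.isPartitionFun.eventually_isPartitionInBox.and <|
      hkap.eventually_isPartitionInBox.and <|
      hnul.eventually_isPartitionInBox.and hnum.eventually_isPartitionInBox).exists
  have hdom_union : ∀ k, ∑ i ∈ range k, num i ≤ ∑ i ∈ range k, nul i := fun k => by
    obtain ⟨a, b, rfl, hle⟩ := hum.exists_sum_range_le hnmB hmB hkB k
    have := hul.sum_range_add_le hnlB hlB hkB a b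
    have := hdom a
    omega
  refine ⟨hdom_union, nVal_le_nVal_of_dominates hnlB.eq_zero hnmB.eq_zero ?_ hdom_union⟩
  rw [hul.sum_range_eq hnlB hlB hkB, hum.sum_range_eq hnmB hmB hkB,
    hlam.sum_range_eq hlB.eq_zero, hmu.sum_range_eq hmB.eq_zero]
end

section
/- Let m ≥ 1 be an integer. For l ∈ ℤ_{≥0} define A_l : ℤ_{≥0} → ℤ_{≥0} by A_l(0) = 1, A_l(p) = 2 for 1 ≤ p ≤ l, and A_l(p) = 0 for p > l. Let M and M' be finitely supported functions ℤ_{≥0} → ℤ_{≥0}, each satisfying the residual condition for m, and let L and L' be finite multisets of nonnegative integers such that M + Σ_{l ∈ L} A_l = M' + Σ_{l ∈ L'} A_l pointwise. Then M = M' and L = L' (as multisets). In other words, a finitely supported function on ℤ_{≥0} admits at most one decomposition into a residual multiplicity function plus a multiset of the 'A-type' sequences (l, l, l−1, l−1, …, 1, 1, 0). -/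
/-!
Away from `p = 0` every `A_l(p)` is even, so `M` and `M'` have the same parity at each `p ≥ 1`.
For `l ≥ 1` the residual condition confines `M l` to two consecutive values determined by
`M (l + 1)` (namely `M (l + 1)` and `M (l + 1) + 1` if `l ≥ m`, and `M (l + 1) - 1` and
`M (l + 1)` if `l < m`), and parity picks one of them. Downward induction from the common zero
tail gives `M = M'` on `p ≥ 1`, and `M 0 = M 1 / 2` settles `p = 0`. Finally `∑_{l ∈ L} A_l`
at `p` is a fixed nonzero multiple of `#{l ∈ L | p ≤ l}`, and these counts determine `L`.
-/

open scoped Classical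

/-- The `A`-type multiplicity sequence: `A_l(0) = 1`, `A_l(p) = 2` for
`1 ≤ p ≤ l`, and `A_l(p) = 0` for `p > l`. -/
def Aseq (l p : ℕ) : ℕ :=
  if p = 0 then 1 else if p ≤ l then 2 else 0

/-- The residual condition for an integer `m ≥ 1` on a multiplicity function
`M : ℕ → ℕ`: `M_l - M_{l+1} ∈ {0,1}` for `l ≥ m`, `M_{l+1} - M_l ∈ {0,1}` for
`1 ≤ l ≤ m - 1`, and `M_0 = ⌊M_1/2⌋`. -/
def ResidualCond (M : ℕ → ℕ) (m : ℕ) : Prop :=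
  (∀ l, m ≤ l → M (l + 1) ≤ M l ∧ M l ≤ M (l + 1) + 1) ∧
  (∀ l, 1 ≤ l → l + 1 ≤ m → M l ≤ M (l + 1) ∧ M (l + 1) ≤ M l + 1) ∧
  M 0 = M 1 / 2

lemma Multiset.countP_le_eq_count_add_countP_succ_le (L : Multiset ℕ) (l : ℕ) :
    L.countP (l ≤ ·) = L.count l + L.countP (l + 1 ≤ ·) := by
  induction L using Multiset.induction with
  | empty => simp
  | cons a s ih =>
    simp only [Multiset.countP_cons, Multiset.count_cons, ih]
    split_ifs <;> omega

lemma Multiset.eq_of_countP_le_eq {L L' : Multiset ℕ}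
    (h : ∀ p, L.countP (p ≤ ·) = L'.countP (p ≤ ·)) : L = L' := by
  ext l
  have hL := L.countP_le_eq_count_add_countP_succ_le l
  have hL' := L'.countP_le_eq_count_add_countP_succ_le l
  have := h l
  have := h (l + 1)
  omega

lemma sum_map_Aseq (L : Multiset ℕ) (p : ℕ) :
    (L.map fun l => Aseq l p).sum = (if p = 0 then 1 else 2) * L.countP (p ≤ ·) := by
  induction L using Multiset.induction with
  | empty => simp
  | cons a s ih =>
    rw [Multiset.map_cons, Multiset.sum_cons, ih, Multiset.countP_cons, Aseq]
    split_ifs <;> omega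

lemma eq_of_sum_map_Aseq_eq {L L' : Multiset ℕ}
    (h : ∀ p, (L.map fun l => Aseq l p).sum = (L'.map fun l => Aseq l p).sum) : L = L' :=
  Multiset.eq_of_countP_le_eq fun p => by
    have hp := h p
    rw [sum_map_Aseq, sum_map_Aseq] at hp
    split_ifs at hp <;> omega

namespace ResidualCond

variable {M M' : ℕ → ℕ} {m : ℕ}

lemma eq_of_eq_succ (hM : ResidualCond M m) (hM' : ResidualCond M' m) {l : ℕ} (hl : 1 ≤ l)
    (hpar : M l % 2 = M' l % 2) (hsucc : M (l + 1) = M' (l + 1)) : M l = M' l := by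
  by_cases hml : m ≤ l
  · have := hM.1 l hml
    have := hM'.1 l hml
    omega
  · have := hM.2.1 l hl (by omega)
    have := hM'.2.1 l hl (by omega)
    omega

lemma eq_of_mod_two_eq (hM : ResidualCond M m) (hM' : ResidualCond M' m) {N : ℕ}
    (htail : ∀ p, N ≤ p → M p = M' p) (hpar : ∀ p, 1 ≤ p → M p % 2 = M' p % 2) :
    M = M' := by
  have hpos : ∀ p, 1 ≤ p → M p = M' p := fun p hp =>
    Nat.decreasingInduction'
      (fun k _ hpk ih => hM.eq_of_eq_succ hM' (hp.trans hpk) (hpar k (hp.trans hpk)) ih)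
      (le_max_left p N) (htail _ (le_max_right p N))
  funext p
  rcases p with _ | p
  · rw [hM.2.2, hM'.2.2, hpos 1 le_rfl]
  · exact hpos (p + 1) p.succ_pos

end ResidualCond

theorem stmt10_general (m : ℕ) (M M' : ℕ → ℕ)
    (hMfin : ∃ N, ∀ p, N ≤ p → M p = 0) (hM'fin : ∃ N, ∀ p, N ≤ p → M' p = 0)
    (hM : ResidualCond M m) (hM' : ResidualCond M' m)
    (L L' : Multiset ℕ)
    (heq : ∀ p, M p + (L.map fun l => Aseq l p).sum
              = M' p + (L'.map fun l => Aseq l p).sum) :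
    M = M' ∧ L = L' := by
  obtain ⟨N, hN⟩ := hMfin
  obtain ⟨N', hN'⟩ := hM'fin
  have hMM' : M = M' := by
    refine hM.eq_of_mod_two_eq hM' (N := max N N') (fun p hp => ?_) (fun p hp => ?_)
    · rw [hN p (le_of_max_le_left hp), hN' p (le_of_max_le_right hp)]
    · have hp' := heq p
      rw [sum_map_Aseq, sum_map_Aseq, if_neg (by omega)] at hp'
      omega
  subst hMM'
  exact ⟨rfl, eq_of_sum_map_Aseq_eq fun p => Nat.add_left_cancel (heq p)⟩

/-- for an integer `m ≥ 1`, a finitely supported function on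
`ℤ_{≥0}` admits at most one decomposition into a residual multiplicity
function plus a multiset of `A`-type sequences. -/
theorem stmt10 (m : ℕ) (hm : 1 ≤ m) (M M' : ℕ → ℕ)
    (hMfin : ∃ N, ∀ p, N ≤ p → M p = 0) (hM'fin : ∃ N, ∀ p, N ≤ p → M' p = 0)
    (hM : ResidualCond M m) (hM' : ResidualCond M' m)
    (L L' : Multiset ℕ)
    (heq : ∀ p, M p + (L.map fun l => Aseq l p).sum
              = M' p + (L'.map fun l => Aseq l p).sum) :
    M = M' ∧ L = L' :=
  stmt10_general m M M' hMfin hM'fin hM hM' L L' heq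
end

section
/- Let m ≥ 0 and n ≥ 1 be integers. For λ = (1^{r_1} 2^{r_2} ⋯) ∈ U_m(n), set J(λ) = {(i−1)/2 : r_i is odd} and let d(λ) be the partition containing each part i with multiplicity ⌊r_i/2⌋. Then λ ↦ (d(λ), J(λ)) is a bijection from U_m(n) onto the set of pairs (d, J) where d is a partition, J is a finite set of pairwise distinct nonnegative integers with |J| ≥ m, and 2|d| + Σ_{j ∈ J} (2j + 1) = 2n + m². -/
open scoped Classical

/-- A multiplicity function of a partition: `r i` is the multiplicity of the
part `i`; there is no part `0` and `r` is finitely supported. -/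
def IsMultFun (r : ℕ → ℕ) : Prop :=
  r 0 = 0 ∧ ∃ N, ∀ i, N ≤ i → r i = 0

/-- The weight of a partition given by its multiplicity function. -/
noncomputable def mweight (r : ℕ → ℕ) : ℕ :=
  ∑ᶠ i : ℕ, i * r i

lemma mweight_eq_sum (r : ℕ → ℕ) (N : ℕ) (hN : ∀ i, N ≤ i → r i = 0) :
    mweight r = ∑ i ∈ Finset.range N, i * r i := by
  apply finsum_eq_finset_sum_of_support_subset
  intro i hi
  simp only [Function.mem_support] at hi
  simp only [Finset.coe_range, Set.mem_Iio]
  by_contra h'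
  exact hi (by rw [hN i (le_of_not_gt h')]; ring)

lemma sum_odd_eq (r : ℕ → ℕ) (N : ℕ) (hN : ∀ i, N ≤ i → r i = 0) :
    ∑ᶠ i ∈ {i : ℕ | Odd (r i)}, i
      = ∑ i ∈ Finset.range N, (if Odd (r i) then i else 0) := by
  rw [finsum_mem_def]
  rw [finsum_eq_finset_sum_of_support_subset _ (s := Finset.range N) ?_]
  · apply Finset.sum_congr rfl
    intro i _
    simp [Set.indicator_apply, Set.mem_setOf_eq]
  · intro i hi
    simp only [Function.mem_support] at hi
    simp only [Finset.coe_range, Set.mem_Iio]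
    by_contra h'
    apply hi
    have h0 : ¬ Odd (r i) := by rw [hN i (le_of_not_gt h')]; simp
    simp [Set.indicator_apply, Set.mem_setOf_eq, h0]

lemma decomp (r : ℕ → ℕ) (N : ℕ) (hN : ∀ i, N ≤ i → r i = 0) :
    mweight r = 2 * mweight (fun i => r i / 2) + ∑ᶠ i ∈ {i : ℕ | Odd (r i)}, i := by
  rw [mweight_eq_sum r N hN, mweight_eq_sum _ N (fun i hi => by simp [hN i hi]),
      sum_odd_eq r N hN, Finset.mul_sum, ← Finset.sum_add_distrib]
  apply Finset.sum_congr rfl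
  intro i _
  by_cases h : Odd (r i)
  · rw [if_pos h]
    rw [Nat.odd_iff] at h
    set q := r i / 2 with hq
    have hr : r i = 2 * q + 1 := by omega
    rw [hr]; ring
  · rw [if_neg h]
    rw [Nat.odd_iff] at h
    set q := r i / 2 with hq
    have hr : r i = 2 * q := by omega
    rw [hr]; ring

lemma g_injOn {S : Set ℕ} (hS : ∀ i ∈ S, i % 2 = 1) :
    Set.InjOn (fun i => (i - 1) / 2) S := by
  intro a ha b hb hab
  have h1 := hS a ha
  have h2 := hS b hb
  simp only at hab
  omega

lemma e_g_image {S : Set ℕ} (hS : ∀ i ∈ S, i % 2 = 1) :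
    (fun j => 2 * j + 1) '' ((fun i => (i - 1) / 2) '' S) = S := by
  rw [← Set.image_comp]
  have h : Set.EqOn ((fun j => 2 * j + 1) ∘ (fun i => (i - 1) / 2)) id S := by
    intro i hi
    have := hS i hi
    simp only [Function.comp_apply, id_eq]
    omega
  rw [Set.image_congr h, Set.image_id]

lemma g_e_image (J : Set ℕ) :
    (fun i => (i - 1) / 2) '' ((fun j => 2 * j + 1) '' J) = J := by
  rw [← Set.image_comp]
  have h : Set.EqOn ((fun i => (i - 1) / 2) ∘ (fun j => 2 * j + 1)) id J := by
    intro j _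
    simp only [Function.comp_apply, id_eq]
    omega
  rw [Set.image_congr h, Set.image_id]

lemma image_inj {S T : Set ℕ} (hS : ∀ i ∈ S, i % 2 = 1) (hT : ∀ i ∈ T, i % 2 = 1)
    (h : (fun i => (i - 1) / 2) '' S = (fun i => (i - 1) / 2) '' T) : S = T := by
  have h2 := congrArg (Set.image (fun j => 2 * j + 1)) h
  rwa [e_g_image hS, e_g_image hT] at h2

lemma odd_of_odd_mult {r : ℕ → ℕ} (he : ∀ i, Even i → Even (r i)) :
    ∀ i ∈ {i : ℕ | Odd (r i)}, i % 2 = 1 := by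
  intro i hi
  rcases Nat.even_or_odd i with h | h
  · exact absurd hi (Nat.not_odd_iff_even.mpr (he i h))
  · exact Nat.odd_iff.mp h

/-- for integers `m ≥ 0` and `n ≥ 1`, the map
`λ ↦ (d(λ), J(λ))`, where `d(λ)` has multiplicities `⌊r_i/2⌋` and
`J(λ) = {(i-1)/2 : r_i odd}`, is a bijection from `U_m(n)` (partitions of
`2n + m²` with even parts of even multiplicity and at least `m` distinct
part-values of odd multiplicity) onto the set of pairs `(d, J)` of a
partition `d` and a finite set `J` of nonnegative integers with `|J| ≥ m`
and `2|d| + Σ_{j ∈ J} (2j + 1) = 2n + m²`. -/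
theorem stmt11 (m n : ℕ) (hn : 1 ≤ n) :
    Set.BijOn
      (fun r : ℕ → ℕ =>
        ((fun i => r i / 2, (fun i => (i - 1) / 2) '' {i : ℕ | Odd (r i)}) :
          (ℕ → ℕ) × Set ℕ))
      {r : ℕ → ℕ | IsMultFun r ∧ mweight r = 2 * n + m ^ 2 ∧
        (∀ i, Even i → Even (r i)) ∧ m ≤ Set.ncard {i : ℕ | Odd (r i)}}
      {p : (ℕ → ℕ) × Set ℕ | IsMultFun p.1 ∧ p.2.Finite ∧
        m ≤ Set.ncard p.2 ∧
        2 * mweight p.1 + ∑ᶠ j ∈ p.2, (2 * j + 1) = 2 * n + m ^ 2} := by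
  refine ⟨?_, ?_, ?_⟩
  · -- MapsTo
    rintro r ⟨⟨hr0, N, hN⟩, hw, heven, hcard⟩
    have hodd := odd_of_odd_mult heven
    have hSfin : {i : ℕ | Odd (r i)}.Finite := by
      apply Set.Finite.subset (Set.finite_Iio N)
      intro i hi
      simp only [Set.mem_Iio]
      by_contra h'
      have h0 := hN i (le_of_not_gt h')
      simp [Set.mem_setOf_eq, h0] at hi
    refine ⟨⟨by simp [hr0], N, fun i hi => by simp [hN i hi]⟩, hSfin.image _, ?_, ?_⟩
    · simpa [Set.ncard_image_of_injOn (g_injOn hodd)] using hcard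
    · have hJ : ∑ᶠ j ∈ (fun i => (i - 1) / 2) '' {i : ℕ | Odd (r i)}, (2 * j + 1)
          = ∑ᶠ i ∈ {i : ℕ | Odd (r i)}, i := by
        rw [finsum_mem_image (g_injOn hodd)]
        apply finsum_mem_congr rfl
        intro i hi
        have := hodd i hi
        omega
      simp only
      rw [hJ, ← decomp r N hN, hw]
  · -- InjOn
    rintro r₁ ⟨⟨h10, N₁, hN₁⟩, hw₁, he₁, _⟩ r₂ ⟨⟨h20, N₂, hN₂⟩, hw₂, he₂, _⟩ heq
    simp only [Prod.mk.injEq] at heq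
    obtain ⟨hd, hJ⟩ := heq
    have hST : {i : ℕ | Odd (r₁ i)} = {i : ℕ | Odd (r₂ i)} :=
      image_inj (odd_of_odd_mult he₁) (odd_of_odd_mult he₂) hJ
    funext i
    have hdi : r₁ i / 2 = r₂ i / 2 := congrFun hd i
    have hmi : r₁ i % 2 = 1 ↔ r₂ i % 2 = 1 := by
      rw [← Nat.odd_iff, ← Nat.odd_iff]
      exact Set.ext_iff.mp hST i
    omega
  · -- SurjOn
    rintro ⟨d, J⟩ ⟨⟨hd0, N, hN⟩, hJfin, hJcard, hsum⟩
    set r : ℕ → ℕ := fun i => 2 * d i + (if i ∈ (fun j => 2 * j + 1) '' J then 1 else 0)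
      with hrdef
    have he_inj : Function.Injective (fun j : ℕ => 2 * j + 1) := by
      intro a b h; simpa using h
    have hS : {i : ℕ | Odd (r i)} = (fun j => 2 * j + 1) '' J := by
      ext i
      simp only [Set.mem_setOf_eq, hrdef, Nat.odd_iff]
      by_cases h : i ∈ (fun j => 2 * j + 1) '' J
      · simp only [if_pos h]
        constructor
        · intro _; exact h
        · intro _; omega
      · simp only [if_neg h]
        constructor
        · intro hc; omega
        · intro hc; exact absurd hc h
    obtain ⟨M, hM⟩ : ∃ M, ∀ j ∈ J, j < M := by
      rcases J.eq_empty_or_nonempty with h | h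
      · exact ⟨1, fun j hj => by simp [h] at hj⟩
      · obtain ⟨M, hM⟩ := hJfin.bddAbove
        exact ⟨M + 1, fun j hj => Nat.lt_succ_of_le (hM hj)⟩
    have hK : ∀ i, max N (2 * M + 2) ≤ i → r i = 0 := by
      intro i hi
      have hdN : d i = 0 := hN i (le_trans (le_max_left _ _) hi)
      have hiJ : i ∉ (fun j => 2 * j + 1) '' J := by
        rintro ⟨j, hj, hji⟩
        have hji' : 2 * j + 1 = i := hji
        have := hM j hj
        have := le_trans (le_max_right _ _) hi
        omega
      show 2 * d i + (if i ∈ (fun j => 2 * j + 1) '' J then 1 else 0) = 0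
      rw [if_neg hiJ, hdN]
    have hr_div : (fun i => r i / 2) = d := by
      funext i
      simp only [hrdef]
      by_cases h : i ∈ (fun j => 2 * j + 1) '' J
      · simp only [if_pos h]; omega
      · simp only [if_neg h]; omega
    refine ⟨r, ⟨⟨?_, ⟨max N (2 * M + 2), hK⟩⟩, ?_, ?_, ?_⟩, ?_⟩
    · -- r 0 = 0
      have h0 : (0 : ℕ) ∉ (fun j => 2 * j + 1) '' J := by
        rintro ⟨j, _, hj⟩
        have hj' : 2 * j + 1 = 0 := hj
        omega
      have hd0' : d 0 = 0 := hd0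
      simp [hrdef, hd0', h0]
    · -- weight
      rw [decomp r _ hK, hr_div, hS, finsum_mem_image (he_inj.injOn)]
      exact hsum
    · -- even parts
      intro i hi
      have hiJ : i ∉ (fun j => 2 * j + 1) '' J := by
        rintro ⟨j, _, hji⟩
        have hji' : 2 * j + 1 = i := hji
        rw [Nat.even_iff] at hi; omega
      simp only [hrdef, if_neg hiJ, add_zero]
      exact even_two_mul (d i)
    · -- cardinality
      rw [hS, Set.ncard_image_of_injective J he_inj]
      exact hJcard
    · -- maps to (d, J)
      simp only [Prod.mk.injEq]
      exact ⟨hr_div, by rw [hS, g_e_image]⟩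
end

section
/- Let m ≥ 0 be an integer and n ≥ 1. Then a_m((∅, (1^n))) = n² + n(m − 1), and for every bipartition (ξ, η) of n one has a_m(ξ, η) ≤ n² + n(m − 1); that is, the a_m-value of the bipartition (∅, (1,1,…,1)) (corresponding to the sign character) is maximal among all bipartitions of n. -/
open scoped Classical

/-- `(xi, eta)` is a bipartition of `n`: both are weakly decreasing,
eventually-zero functions `ℕ → ℕ` (recording parts, 0-indexed, largest first)
with `|xi| + |eta| = n`. -/
def IsBipartitionOf (n : ℕ) (xi eta : ℕ → ℕ) : Prop :=
  Antitone xi ∧ Antitone eta ∧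
  ∃ N, (∀ i, N ≤ i → xi i = 0 ∧ eta i = 0) ∧
    (∑ i ∈ Finset.range N, xi i) + (∑ i ∈ Finset.range N, eta i) = n

/-- The `m`-symbol as a list: the parts of `xi` (padded with zeros to
`N + m` parts, written in weakly increasing order) contribute the entries
`ξ_i + 2(i-1)`, and the parts of `eta` (padded to `N` parts) contribute
`η_j + 2(j-1)`.  Here `xi, eta` are given largest part first, so the
`(i+1)`-st smallest padded part of `xi` is `xi (N + m - 1 - i)`. -/
def symbList (m : ℕ) (xi eta : ℕ → ℕ) (N : ℕ) : List ℕ :=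
  ((List.range (N + m)).map fun i => xi (N + m - 1 - i) + 2 * i) ++
  ((List.range N).map fun j => eta (N - 1 - j) + 2 * j)

/-- `Σ min(x,y)` over all unordered pairs of distinct positions of a list. -/
def pairMinSum : List ℕ → ℕ
  | [] => 0
  | x :: xs => (xs.map fun y => min x y).sum + pairMinSum xs

/-- The `a`-function `a_m(ξ,η)`: the pair-min sum of the `m`-symbol of
`(ξ,η)` minus that of the `m`-symbol of `(∅,∅)` (same padding `N`). -/
noncomputable def aVal (m : ℕ) (xi eta : ℕ → ℕ) (N : ℕ) : ℤ :=
  (pairMinSum (symbList m xi eta N) : ℤ) -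
  (pairMinSum (symbList m (fun _ => 0) (fun _ => 0) N) : ℤ)

open Finset

lemma pairMinSum_nil : pairMinSum [] = 0 := rfl

lemma pairMinSum_cons (x : ℕ) (xs : List ℕ) :
    pairMinSum (x :: xs) = (xs.map fun y => min x y).sum + pairMinSum xs := rfl

lemma pairMinSum_append (L L' : List ℕ) :
    pairMinSum (L ++ L')
      = pairMinSum L + pairMinSum L'
        + (L.map fun x => (L'.map fun y => min x y).sum).sum := by
  induction L with
  | nil => simp [pairMinSum]
  | cons x xs ih =>
      simp only [List.cons_append, pairMinSum_cons, ih, List.map_append,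
        List.sum_append, List.map_cons, List.sum_cons]
      omega

lemma list_sum_map_range (f : ℕ → ℕ) (M : ℕ) :
    ((List.range M).map f).sum = ∑ i ∈ range M, f i := by
  induction M with
  | zero => simp
  | succ M ih => rw [List.range_succ]; simp [ih, Finset.sum_range_succ]

lemma pairMinSum_map_range (f : ℕ → ℕ) (M : ℕ) :
    pairMinSum ((List.range M).map f) = ∑ i ∈ range M, ∑ j ∈ range i, min (f j) (f i) := by
  induction M with
  | zero => simp [pairMinSum]
  | succ M ih =>
      rw [List.range_succ, List.map_append, pairMinSum_append, ih, Finset.sum_range_succ]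
      simp [pairMinSum, List.map_map, list_sum_map_range, Function.comp]

lemma cross_list (f g : ℕ → ℕ) (M N : ℕ) :
    (((List.range M).map f).map fun x => (((List.range N).map g).map fun y => min x y).sum).sum
      = ∑ i ∈ range M, ∑ j ∈ range N, min (f i) (g j) := by
  simp [List.map_map, Function.comp, list_sum_map_range]

lemma sum_sum_lt (c : ℕ → ℕ) (M : ℕ) :
    ∑ i ∈ range M, ∑ j ∈ range i, c j = ∑ j ∈ range M, (M - (j+1)) * c j := by
  induction M with
  | zero => simp
  | succ M ih =>
      rw [Finset.sum_range_succ, ih, Finset.sum_range_succ]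
      have h : ∀ j ∈ range M, (M + 1 - (j+1)) * c j = (M - (j+1)) * c j + c j := by
        intro j hj
        rw [mem_range] at hj
        have : M + 1 - (j+1) = (M - (j+1)) + 1 := by omega
        rw [this, add_mul, one_mul]
      rw [Finset.sum_congr rfl h, Finset.sum_add_distrib]
      simp

lemma sum_ite_lt_gen (c t X : ℕ) :
    ∑ j ∈ range X, (if t < j then c else 0) = (X - (t+1)) * c := by
  induction X with
  | zero => simp
  | succ X ih =>
      rw [Finset.sum_range_succ, ih]
      by_cases h : t < X
      · have h1 : X + 1 - (t+1) = (X - (t+1)) + 1 := by omega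
        simp [h, h1, add_mul]
      · have h1 : X + 1 - (t+1) = 0 := by omega
        have h2 : X - (t+1) = 0 := by omega
        simp [h, h1, h2]

lemma chainBound (a : ℕ → ℕ) (ha : Monotone a) (M : ℕ) :
    2 * (∑ j ∈ range M, (M - (j+1)) * a j) + (∑ j ∈ range M, a j)
      ≤ (∑ j ∈ range M, a j) * (∑ j ∈ range M, a j) := by
  induction M with
  | zero => simp
  | succ M ih =>
      have hco : ∑ j ∈ range (M+1), (M+1 - (j+1)) * a j
          = (∑ j ∈ range M, (M - (j+1)) * a j) + ∑ j ∈ range M, a j := by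
        rw [Finset.sum_range_succ]
        have h : ∀ j ∈ range M, (M + 1 - (j+1)) * a j = (M - (j+1)) * a j + a j := by
          intro j hj
          rw [mem_range] at hj
          have : M + 1 - (j+1) = (M - (j+1)) + 1 := by omega
          rw [this, add_mul, one_mul]
        rw [Finset.sum_congr rfl h, Finset.sum_add_distrib]
        simp
      rw [hco, Finset.sum_range_succ]
      set S := ∑ j ∈ range M, (M-(j+1)) * a j with hS
      set P := ∑ j ∈ range M, a j with hP
      rcases Nat.eq_zero_or_pos (a M) with h0 | h1
      · have hz : ∀ j ∈ range M, a j = 0 := by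
          intro j hj
          rw [mem_range] at hj
          have := ha (le_of_lt hj)
          omega
        have hS0 : S = 0 := by
          rw [hS]; exact Finset.sum_eq_zero (fun j hj => by rw [hz j hj, mul_zero])
        have hP0 : P = 0 := Finset.sum_eq_zero hz
        simp [hS0, hP0, h0]
      · nlinarith [ih, h1]

lemma sum_ext (f : ℕ → ℕ) (c : ℕ) (hf : ∀ i, c ≤ i → f i = 0) {K K' : ℕ}
    (hK : c ≤ K) (hK' : c ≤ K') :
    ∑ i ∈ range K, f i = ∑ i ∈ range K', f i := by
  have h1 : ∀ K, c ≤ K → ∑ i ∈ range K, f i = ∑ i ∈ range c, f i := by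
    intro K hK
    exact (Finset.sum_subset (range_subset_range.mpr hK)
      (fun x hx hnx => hf x (by simp only [mem_range] at hx hnx; omega))).symm
  rw [h1 K hK, h1 K' hK']

lemma antitone_vanish (f : ℕ → ℕ) (hf : Antitone f) (N₀ n : ℕ)
    (h0 : ∀ i, N₀ ≤ i → f i = 0) (hle : ∑ i ∈ range N₀, f i ≤ n) :
    ∀ i, n ≤ i → f i = 0 := by
  intro i hi
  by_contra hne
  have hfi : 1 ≤ f i := Nat.one_le_iff_ne_zero.mpr hne
  have hiN : i < N₀ := by
    by_contra h
    exact hne (h0 i (by omega))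
  have hsub : ∑ j ∈ range (i+1), f j ≤ ∑ j ∈ range N₀, f j :=
    Finset.sum_le_sum_of_subset (range_subset_range.mpr (by omega))
  have h2 : i + 1 ≤ ∑ j ∈ range (i+1), f j := by
    calc i + 1 = ∑ _j ∈ range (i+1), 1 := by simp
    _ ≤ ∑ j ∈ range (i+1), f j := by
        apply Finset.sum_le_sum
        intro j hj
        rw [mem_range] at hj
        exact le_trans hfi (hf (by omega))
  omega

lemma symb_decomp (m N : ℕ) (xi eta : ℕ → ℕ) (hxi : Antitone xi) (heta : Antitone eta) :
    pairMinSum (symbList m xi eta N)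
      = pairMinSum (symbList m (fun _ => 0) (fun _ => 0) N)
        + ((∑ j ∈ Finset.range (N+m), (N+m - (j+1)) * xi (N+m-1-j))
          + (∑ j ∈ Finset.range N, (N - (j+1)) * eta (N-1-j))
          + ∑ i ∈ Finset.range (N+m), ∑ j ∈ Finset.range N,
              (min (xi (N+m-1-i) + 2*i) (eta (N-1-j) + 2*j) - 2 * min i j)) := by
  unfold symbList
  rw [pairMinSum_append, pairMinSum_append,
      pairMinSum_map_range, pairMinSum_map_range,
      pairMinSum_map_range, pairMinSum_map_range,
      cross_list, cross_list]
  have hA : ∑ i ∈ range (N+m), ∑ j ∈ range i,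
        min (xi (N+m-1-j) + 2*j) (xi (N+m-1-i) + 2*i)
      = (∑ i ∈ range (N+m), ∑ j ∈ range i, min ((0:ℕ) + 2*j) ((0:ℕ) + 2*i))
        + ∑ j ∈ range (N+m), (N+m-(j+1)) * xi (N+m-1-j) := by
    rw [← sum_sum_lt (fun j => xi (N+m-1-j)) (N+m), ← Finset.sum_add_distrib]
    apply Finset.sum_congr rfl
    intro i hi
    rw [← Finset.sum_add_distrib]
    apply Finset.sum_congr rfl
    intro j hj
    rw [mem_range] at hi hj
    have hmono : xi (N+m-1-j) ≤ xi (N+m-1-i) := hxi (by omega)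
    omega
  have hB : ∑ i ∈ range N, ∑ j ∈ range i,
        min (eta (N-1-j) + 2*j) (eta (N-1-i) + 2*i)
      = (∑ i ∈ range N, ∑ j ∈ range i, min ((0:ℕ) + 2*j) ((0:ℕ) + 2*i))
        + ∑ j ∈ range N, (N-(j+1)) * eta (N-1-j) := by
    rw [← sum_sum_lt (fun j => eta (N-1-j)) N, ← Finset.sum_add_distrib]
    apply Finset.sum_congr rfl
    intro i hi
    rw [← Finset.sum_add_distrib]
    apply Finset.sum_congr rfl
    intro j hj
    rw [mem_range] at hi hj
    have hmono : eta (N-1-j) ≤ eta (N-1-i) := heta (by omega)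
    omega
  have hC : ∑ i ∈ range (N+m), ∑ j ∈ range N,
        min (xi (N+m-1-i) + 2*i) (eta (N-1-j) + 2*j)
      = (∑ i ∈ range (N+m), ∑ j ∈ range N, min ((0:ℕ) + 2*i) ((0:ℕ) + 2*j))
        + ∑ i ∈ range (N+m), ∑ j ∈ range N,
            (min (xi (N+m-1-i) + 2*i) (eta (N-1-j) + 2*j) - 2 * min i j) := by
    rw [← Finset.sum_add_distrib]
    apply Finset.sum_congr rfl
    intro i hi
    rw [← Finset.sum_add_distrib]
    apply Finset.sum_congr rfl
    intro j hj
    omega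
  rw [hA, hB, hC]
  ring

set_option maxHeartbeats 2000000 in
/-- for an integer `m ≥ 0` and `n ≥ 1`, the bipartition
`(∅, (1^n))` has `a_m`-value `n² + n(m - 1)` (for every sufficiently large
padding `N ≥ n`), and this value is maximal among all bipartitions of `n`. -/
theorem stmt12 (m n : ℕ) (hn : 1 ≤ n) :
    (∀ N : ℕ, n ≤ N →
      aVal m (fun _ => 0) (fun i => if i < n then 1 else 0) N
        = (n : ℤ) ^ 2 + (n : ℤ) * ((m : ℤ) - 1)) ∧
    (∀ xi eta : ℕ → ℕ, IsBipartitionOf n xi eta → ∀ N : ℕ, n ≤ N →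
      aVal m xi eta N ≤ (n : ℤ) ^ 2 + (n : ℤ) * ((m : ℤ) - 1)) := by
  constructor
  · -- Part 1: exact value for (∅, (1^n))
    intro N hN
    have hxi0 : Antitone (fun _ : ℕ => (0:ℕ)) := antitone_const
    have heta0 : Antitone (fun i : ℕ => if i < n then 1 else 0) := by
      intro i j hij
      dsimp only
      split_ifs <;> omega
    have hdec := symb_decomp m N (fun _ => 0) (fun i => if i < n then 1 else 0) hxi0 heta0
    -- the xi-chain contribution vanishes
    have hSa : ∑ j ∈ Finset.range (N+m), (N+m - (j+1)) * (fun _ : ℕ => (0:ℕ)) (N+m-1-j) = 0 := by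
      simp
    -- the eta-chain contribution
    have hSb : ∑ j ∈ Finset.range N, (N - (j+1)) * (fun i : ℕ => if i < n then 1 else 0) (N-1-j)
        = ∑ k ∈ range n, k := by
      have h1 : ∀ j ∈ range N, (N - (j+1)) * (fun i : ℕ => if i < n then 1 else 0) (N-1-j)
          = (fun k => k * (if k < n then 1 else 0)) (N-1-j) := by
        intro j hj
        dsimp only
        have : N - (j+1) = N - 1 - j := by omega
        rw [this]
      rw [Finset.sum_congr rfl h1, Finset.sum_range_reflect (fun k => k * (if k < n then 1 else 0)) N]
      rw [← Finset.sum_subset (Finset.range_subset_range.mpr hN)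
        (fun x _ hx => by simp only [Finset.mem_range] at hx; simp [if_neg (by omega : ¬ x < n)])]
      apply Finset.sum_congr rfl
      intro k hk
      rw [Finset.mem_range] at hk
      simp [hk]
    -- the cross contribution
    have hST : ∑ i ∈ Finset.range (N+m), ∑ j ∈ Finset.range N,
          (min ((fun _ : ℕ => (0:ℕ)) (N+m-1-i) + 2*i)
            ((fun i : ℕ => if i < n then 1 else 0) (N-1-j) + 2*j) - 2 * min i j)
        = (∑ k ∈ range n, k) + n * m := by
      have h1 : ∀ i ∈ range (N+m), ∀ j ∈ range N,
          (min ((fun _ : ℕ => (0:ℕ)) (N+m-1-i) + 2*i)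
            ((fun i : ℕ => if i < n then 1 else 0) (N-1-j) + 2*j) - 2 * min i j)
          = if j < i then (if N-1-j < n then 1 else 0) else 0 := by
        intro i _ j _
        dsimp only
        split_ifs <;> omega
      rw [Finset.sum_congr rfl (fun i hi => Finset.sum_congr rfl (h1 i hi))]
      rw [Finset.sum_comm]
      have h2 : ∀ j ∈ range N, ∑ i ∈ range (N+m), (if j < i then (if N-1-j < n then 1 else 0) else 0)
          = (fun k => (k + m) * (if k < n then 1 else 0)) (N-1-j) := by
        intro j hj
        rw [Finset.mem_range] at hj
        rw [sum_ite_lt_gen]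
        dsimp only
        have : N + m - (j+1) = (N - 1 - j) + m := by omega
        rw [this]
      rw [Finset.sum_congr rfl h2,
        Finset.sum_range_reflect (fun k => (k + m) * (if k < n then 1 else 0)) N]
      have h3 : ∑ k ∈ range N, (k + m) * (if k < n then 1 else 0)
          = ∑ k ∈ range n, (k + m) := by
        rw [← Finset.sum_subset (Finset.range_subset_range.mpr hN)
          (fun x _ hx => by simp only [Finset.mem_range] at hx; simp [if_neg (by omega : ¬ x < n)])]
        apply Finset.sum_congr rfl
        intro k hk
        rw [Finset.mem_range] at hk
        simp [hk]
      rw [h3, Finset.sum_add_distrib]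
      simp [mul_comm]
    set G := ∑ k ∈ range n, k with hGdef
    have hval : aVal m (fun _ => 0) (fun i => if i < n then 1 else 0) N
        = ((G + (G + n * m) : ℕ) : ℤ) := by
      unfold aVal
      rw [hdec, hSa, hSb, hST]
      push_cast
      ring
    have hG : G * 2 = n * (n - 1) := Finset.sum_range_id_mul_two n
    rw [hval]
    have hGZ : ((G : ℕ) : ℤ) * 2 = (n:ℤ) * ((n:ℤ) - 1) := by
      have h5 : ((n * (n-1) : ℕ) : ℤ) = (n:ℤ) * ((n:ℤ) - 1) := by
        push_cast [Nat.cast_sub hn]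
        ring
      rw [← h5]
      exact_mod_cast congrArg (Nat.cast : ℕ → ℤ) hG
    push_cast
    linarith [hGZ]
  · -- Part 2: maximality
    intro xi eta hbi N hN
    obtain ⟨hxi, heta, N₀, hv, hsum⟩ := hbi
    set p := ∑ i ∈ range (N+m), xi i with hp_def
    set q := ∑ i ∈ range N, eta i with hq_def
    -- p + q = n
    have hxile : ∑ i ∈ range N₀, xi i ≤ n := by omega
    have hetale : ∑ i ∈ range N₀, eta i ≤ n := by omega
    have hxi0 : ∀ i, n ≤ i → xi i = 0 :=
      antitone_vanish xi hxi N₀ n (fun i h => (hv i h).1) hxile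
    have heta0 : ∀ i, n ≤ i → eta i = 0 :=
      antitone_vanish eta heta N₀ n (fun i h => (hv i h).2) hetale
    have hp : p = ∑ i ∈ range N₀, xi i := by
      rw [hp_def]
      rw [sum_ext xi n hxi0 (by omega : n ≤ N+m) (le_max_right N₀ n)]
      exact sum_ext xi N₀ (fun i h => (hv i h).1) (le_max_left N₀ n) le_rfl
    have hq : q = ∑ i ∈ range N₀, eta i := by
      rw [hq_def]
      rw [sum_ext eta n heta0 (by omega : n ≤ N) (le_max_right N₀ n)]
      exact sum_ext eta N₀ (fun i h => (hv i h).2) (le_max_left N₀ n) le_rfl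
    have hpq : p + q = n := by rw [hp, hq]; exact hsum
    -- chain bounds
    have haMono : Monotone (fun j => xi (N+m-1-j)) := by
      intro i j hij
      exact hxi (by omega : N+m-1-j ≤ N+m-1-i)
    have hbMono : Monotone (fun j => eta (N-1-j)) := by
      intro i j hij
      exact heta (by omega : N-1-j ≤ N-1-i)
    have hPa : ∑ j ∈ range (N+m), xi (N+m-1-j) = p := Finset.sum_range_reflect xi (N+m)
    have hPb : ∑ j ∈ range N, eta (N-1-j) = q := Finset.sum_range_reflect eta N
    have hCa := chainBound (fun j => xi (N+m-1-j)) haMono (N+m)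
    have hCb := chainBound (fun j => eta (N-1-j)) hbMono N
    rw [hPa] at hCa
    rw [hPb] at hCb
    set Ca := ∑ j ∈ range (N+m), (N+m - (j+1)) * xi (N+m-1-j) with hCa_def
    set Cb := ∑ j ∈ range N, (N - (j+1)) * eta (N-1-j) with hCb_def
    set ST := ∑ i ∈ Finset.range (N+m), ∑ j ∈ Finset.range N,
        (min (xi (N+m-1-i) + 2*i) (eta (N-1-j) + 2*j) - 2 * min i j) with hST_def
    -- cross bound
    have hSTle : ST ≤ Ca + (Cb + m * q) + ∑ i ∈ range (N+m),
        (if i ∈ range N then min (xi (N+m-1-i)) (eta (N-1-i)) else 0) := by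
      have step1 : ST ≤ ∑ i ∈ range (N+m), ∑ j ∈ range N,
          ((if i < j then xi (N+m-1-i) else 0) + (if j < i then eta (N-1-j) else 0)
            + (if i = j then min (xi (N+m-1-i)) (eta (N-1-j)) else 0)) := by
        rw [hST_def]
        apply Finset.sum_le_sum
        intro i _
        apply Finset.sum_le_sum
        intro j _
        split_ifs <;> omega
      have step2 : ∑ i ∈ range (N+m), ∑ j ∈ range N,
          ((if i < j then xi (N+m-1-i) else 0) + (if j < i then eta (N-1-j) else 0)
            + (if i = j then min (xi (N+m-1-i)) (eta (N-1-j)) else 0))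
          = (∑ i ∈ range (N+m), ∑ j ∈ range N, (if i < j then xi (N+m-1-i) else 0))
            + (∑ i ∈ range (N+m), ∑ j ∈ range N, (if j < i then eta (N-1-j) else 0))
            + (∑ i ∈ range (N+m), ∑ j ∈ range N,
                (if i = j then min (xi (N+m-1-i)) (eta (N-1-j)) else 0)) := by
        simp [Finset.sum_add_distrib]
      have hS1 : ∑ i ∈ range (N+m), ∑ j ∈ range N, (if i < j then xi (N+m-1-i) else 0) ≤ Ca := by
        rw [hCa_def]
        rw [Finset.sum_congr rfl (fun i _ => sum_ite_lt_gen (xi (N+m-1-i)) i N)]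
        apply Finset.sum_le_sum
        intro i _
        exact Nat.mul_le_mul (by omega) le_rfl
      have hS2 : ∑ i ∈ range (N+m), ∑ j ∈ range N, (if j < i then eta (N-1-j) else 0)
          = Cb + m * q := by
        rw [Finset.sum_comm]
        rw [Finset.sum_congr rfl (fun j _ => sum_ite_lt_gen (eta (N-1-j)) j (N+m))]
        have h5 : ∀ j ∈ range N, (N+m - (j+1)) * eta (N-1-j)
            = (N - (j+1)) * eta (N-1-j) + m * eta (N-1-j) := by
          intro j hj
          rw [Finset.mem_range] at hj
          have : N + m - (j+1) = (N - (j+1)) + m := by omega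
          rw [this, add_mul]
        rw [Finset.sum_congr rfl h5, Finset.sum_add_distrib, hCb_def, ← Finset.mul_sum, hPb]
      have hS3 : ∑ i ∈ range (N+m), ∑ j ∈ range N,
          (if i = j then min (xi (N+m-1-i)) (eta (N-1-j)) else 0)
          = ∑ i ∈ range (N+m), (if i ∈ range N then min (xi (N+m-1-i)) (eta (N-1-i)) else 0) := by
        apply Finset.sum_congr rfl
        intro i _
        exact Finset.sum_ite_eq (range N) i (fun j => min (xi (N+m-1-i)) (eta (N-1-j)))
      calc ST ≤ _ := step1
      _ = _ := step2
      _ ≤ Ca + (Cb + m * q) + ∑ i ∈ range (N+m),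
            (if i ∈ range N then min (xi (N+m-1-i)) (eta (N-1-i)) else 0) := by
          rw [hS2, hS3]
          omega
    set S3 := ∑ i ∈ range (N+m),
        (if i ∈ range N then min (xi (N+m-1-i)) (eta (N-1-i)) else 0) with hS3_def
    -- value of aVal
    have hval : aVal m xi eta N = ((Ca + Cb + ST : ℕ) : ℤ) := by
      unfold aVal
      rw [symb_decomp m N xi eta hxi heta, hCa_def, hCb_def, hST_def]
      push_cast
      ring
    -- conclude
    have hkey : Ca + Cb + ST + n ≤ n * n + m * n := by
      rcases Nat.eq_zero_or_pos p with hp0 | hp1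
      · have hsum0 : ∑ i ∈ range (N+m), xi i = 0 := by rw [← hp_def]; exact hp0
        have hxz : ∀ j ∈ range (N+m), xi j = 0 := Finset.sum_eq_zero_iff.mp hsum0
        have hS30 : S3 = 0 := by
          rw [hS3_def]
          apply Finset.sum_eq_zero
          intro i hi
          rw [Finset.mem_range] at hi
          have hz : xi (N+m-1-i) = 0 := hxz _ (by rw [Finset.mem_range]; omega)
          simp [hz]
        have hqn : q = n := by omega
        have hCa0 : 2 * Ca ≤ 0 := by
          have := hCa
          rw [hp0] at this
          omega
        rw [← hqn]
        linarith [hCa, hCb, hSTle, hS30, hCa0]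
      · have hS3q : S3 ≤ q := by
          rw [hS3_def]
          calc ∑ i ∈ range (N+m), (if i ∈ range N then min (xi (N+m-1-i)) (eta (N-1-i)) else 0)
              ≤ ∑ i ∈ range (N+m), (if i ∈ range N then eta (N-1-i) else 0) := by
                apply Finset.sum_le_sum
                intro i _
                split_ifs
                · exact min_le_right _ _
                · exact le_rfl
          _ = ∑ i ∈ range N, eta (N-1-i) := by
                rw [← Finset.sum_subset (Finset.range_subset_range.mpr (by omega : N ≤ N + m))]
                · apply Finset.sum_congr rfl
                  intro i hi
                  simp [hi]
                · intro x _ hx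
                  simp [hx]
          _ = q := hPb
        have hq2 : q ≤ 2 * (p * q) := by
          calc q = 1 * q := (one_mul q).symm
          _ ≤ (2 * p) * q := Nat.mul_le_mul_right q (by omega)
          _ = 2 * (p * q) := by ring
        have hexp : (p + q) * (p + q) = p * p + 2 * (p * q) + q * q := by ring
        have hmul : m * (p + q) = m * p + m * q := by ring
        rw [← hpq, hexp, hmul]
        linarith [hCa, hCb, hSTle, hS3q, hq2, Nat.zero_le (m * p)]
    rw [hval]
    have hc : ((Ca + Cb + ST : ℕ) : ℤ) + n ≤ (n:ℤ) * n + m * n := by exact_mod_cast hkey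
    nlinarith [hc]
end

section
/- Let n ≥ 1 and let m ≥ 0 with 2m ∈ ℤ and m > n − 1. Then every similarity class of bipartitions of n under ∼_m is a singleton: if (ξ, η) ∼_m (ξ', η') then (ξ, η) = (ξ', η'). -/
open scoped Classical

/-- The `m`-symbol (integer `m ≥ 0`) of a bipartition as a multiset. -/
def symbM (m : ℕ) (xi eta : ℕ → ℕ) (N : ℕ) : Multiset ℕ :=
  ((Multiset.range (N + m)).map fun i => xi (N + m - 1 - i) + 2 * i) +
  ((Multiset.range N).map fun j => eta (N - 1 - j) + 2 * j)

/-- The `m`-symbol of a bipartition for the half-integer `m = k + 1/2`. -/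
def symbMhalf (k : ℕ) (xi eta : ℕ → ℕ) (N : ℕ) : Multiset ℕ :=
  ((Multiset.range (N + k + 1)).map fun i => xi (N + k - i) + 2 * i) +
  ((Multiset.range N).map fun j => eta (N - 1 - j) + 2 * j + 1)


/-- A "row" of a symbol: entries `f (r-1-i) + 2*i` for `i < r`. -/
def rowA (f : ℕ → ℕ) (r : ℕ) : Multiset ℕ :=
  (Multiset.range r).map fun i => f (r - 1 - i) + 2 * i

/-- A shifted row: entries `g (s-1-j) + 2*j + t` for `j < s`. -/
def rowB (g : ℕ → ℕ) (s t : ℕ) : Multiset ℕ :=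
  (Multiset.range s).map fun j => g (s - 1 - j) + 2 * j + t

lemma rowA_succ (f : ℕ → ℕ) (r : ℕ) :
    rowA f (r + 1) = (f 0 + 2 * r) ::ₘ rowA (fun i => f (i + 1)) r := by
  unfold rowA
  rw [Multiset.range_succ, Multiset.map_cons]
  congr 1
  · have h : r + 1 - 1 - r = 0 := by omega
    rw [h]
  · refine Multiset.map_congr rfl fun i hi => ?_
    rw [Multiset.mem_range] at hi
    have h : r + 1 - 1 - i = (r - 1 - i) + 1 := by omega
    rw [h]

lemma rowB_succ (g : ℕ → ℕ) (s t : ℕ) :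
    rowB g (s + 1) t = (g 0 + 2 * s + t) ::ₘ rowB (fun j => g (j + 1)) s t := by
  unfold rowB
  rw [Multiset.range_succ, Multiset.map_cons]
  congr 1
  · have h : s + 1 - 1 - s = 0 := by omega
    rw [h]
  · refine Multiset.map_congr rfl fun j hj => ?_
    rw [Multiset.mem_range] at hj
    have h : s + 1 - 1 - j = (s - 1 - j) + 1 := by omega
    rw [h]

lemma antitone_shift {f : ℕ → ℕ} (hf : Antitone f) : Antitone fun i => f (i + 1) :=
  fun a b hab => hf (by omega)

/-- equal `rowB`s force equal rows. -/
lemma rowB_inj (t : ℕ) : ∀ (s : ℕ) (g g' : ℕ → ℕ), Antitone g → Antitone g' →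
    rowB g s t = rowB g' s t → ∀ j < s, g j = g' j := by
  intro s
  induction s with
  | zero => intro g g' _ _ _ j hj; omega
  | succ s ih =>
    intro g g' hg hg' hEq j hj
    have h00 : g 0 = g' 0 := by
      have hmem : (g 0 + 2 * s + t) ∈ rowB g' (s + 1) t := by
        rw [← hEq, rowB_succ]; exact Multiset.mem_cons_self _ _
      have hmem' : (g' 0 + 2 * s + t) ∈ rowB g (s + 1) t := by
        rw [hEq, rowB_succ]; exact Multiset.mem_cons_self _ _
      obtain ⟨a, ha, hva⟩ := Multiset.mem_map.1 hmem
      obtain ⟨b, hb, hvb⟩ := Multiset.mem_map.1 hmem'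
      rw [Multiset.mem_range] at ha hb
      have h1 : g' (s + 1 - 1 - a) ≤ g' 0 := hg' (Nat.zero_le _)
      have h2 : g (s + 1 - 1 - b) ≤ g 0 := hg (Nat.zero_le _)
      omega
    rw [rowB_succ, rowB_succ, h00] at hEq
    have htail : rowB (fun j => g (j + 1)) s t = rowB (fun j => g' (j + 1)) s t :=
      (Multiset.cons_inj_right _).mp hEq
    match j with
    | 0 => exact h00
    | (j + 1) => exact ih _ _ (antitone_shift hg) (antitone_shift hg') htail j (by omega)

/-- Main injectivity lemma for symbols. -/
lemma rows_inj (t s : ℕ) : ∀ (r : ℕ) (n : ℕ) (f g f' g' : ℕ → ℕ),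
    Antitone f → Antitone g → Antitone f' → Antitone g' →
    (∑ i ∈ Finset.range r, f i) + (∑ j ∈ Finset.range s, g j) = n →
    (∑ i ∈ Finset.range r, f' i) + (∑ j ∈ Finset.range s, g' j) = n →
    2 * s + 2 * n + t ≤ 2 * r + 1 →
    rowA f r + rowB g s t = rowA f' r + rowB g' s t →
    (∀ i < r, f i = f' i) ∧ (∀ j < s, g j = g' j) := by
  intro r
  induction r with
  | zero =>
    intro n f g f' g' _ _ _ _ _ _ hinv _
    refine ⟨fun i hi => by omega, fun j hj => by omega⟩
  | succ r ih =>
    intro n f g f' g' hf hg hf' hg' hsum hsum' hinv hEq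
    have hfle : f 0 ≤ n := by
      have h1 : f 0 ≤ ∑ i ∈ Finset.range (r + 1), f i :=
        Finset.single_le_sum (fun i _ => Nat.zero_le _) (Finset.mem_range.2 (Nat.succ_pos r))
      omega
    have hf'le : f' 0 ≤ n := by
      have h1 : f' 0 ≤ ∑ i ∈ Finset.range (r + 1), f' i :=
        Finset.single_le_sum (fun i _ => Nat.zero_le _) (Finset.mem_range.2 (Nat.succ_pos r))
      omega
    have hgbound : ∀ j < s, g (s - 1 - j) ≤ n := by
      intro j hj
      have h1 : g (s - 1 - j) ≤ g 0 := hg (Nat.zero_le _)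
      have h2 : g 0 ≤ ∑ j ∈ Finset.range s, g j :=
        Finset.single_le_sum (fun i _ => Nat.zero_le _) (Finset.mem_range.2 (by omega))
      omega
    have hg'bound : ∀ j < s, g' (s - 1 - j) ≤ n := by
      intro j hj
      have h1 : g' (s - 1 - j) ≤ g' 0 := hg' (Nat.zero_le _)
      have h2 : g' 0 ≤ ∑ j ∈ Finset.range s, g' j :=
        Finset.single_le_sum (fun i _ => Nat.zero_le _) (Finset.mem_range.2 (by omega))
      omega
    by_cases hf0 : f 0 = 0
    · have hfz : ∀ i, f i = 0 := fun i => by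
        have := hf (Nat.zero_le i); omega
      have hf'0 : f' 0 = 0 := by
        by_contra hne
        have hmem : (f' 0 + 2 * r) ∈ rowA f (r + 1) + rowB g s t := by
          rw [hEq]
          exact Multiset.mem_add.2 (Or.inl (by rw [rowA_succ]; exact Multiset.mem_cons_self _ _))
        rcases Multiset.mem_add.1 hmem with hm | hm
        · obtain ⟨i, hi, hval⟩ := Multiset.mem_map.1 hm
          rw [Multiset.mem_range] at hi
          rw [hfz] at hval
          omega
        · obtain ⟨j, hj, hval⟩ := Multiset.mem_map.1 hm
          rw [Multiset.mem_range] at hj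
          have := hgbound j hj
          omega
      have hf'z : ∀ i, f' i = 0 := fun i => by
        have := hf' (Nat.zero_le i); omega
      have hA : rowA f (r + 1) = rowA f' (r + 1) :=
        Multiset.map_congr rfl fun i _ => by rw [hfz, hf'z]
      rw [hA] at hEq
      have hB := add_left_cancel hEq
      exact ⟨fun i _ => by rw [hfz, hf'z], rowB_inj t s g g' hg hg' hB⟩
    · have hn1 : 1 ≤ n := by omega
      have hf'0 : f' 0 ≠ 0 := by
        intro hne
        have hf'z : ∀ i, f' i = 0 := fun i => by
          have := hf' (Nat.zero_le i); omega
        have hmem : (f 0 + 2 * r) ∈ rowA f' (r + 1) + rowB g' s t := by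
          rw [← hEq]
          exact Multiset.mem_add.2 (Or.inl (by rw [rowA_succ]; exact Multiset.mem_cons_self _ _))
        rcases Multiset.mem_add.1 hmem with hm | hm
        · obtain ⟨i, hi, hval⟩ := Multiset.mem_map.1 hm
          rw [Multiset.mem_range] at hi
          rw [hf'z] at hval
          omega
        · obtain ⟨j, hj, hval⟩ := Multiset.mem_map.1 hm
          rw [Multiset.mem_range] at hj
          have := hg'bound j hj
          omega
      have h00 : f 0 = f' 0 := by
        have le1 : f 0 ≤ f' 0 := by
          have hmem : (f 0 + 2 * r) ∈ rowA f' (r + 1) + rowB g' s t := by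
            rw [← hEq]
            exact Multiset.mem_add.2 (Or.inl (by rw [rowA_succ]; exact Multiset.mem_cons_self _ _))
          rcases Multiset.mem_add.1 hmem with hm | hm
          · obtain ⟨i, hi, hval⟩ := Multiset.mem_map.1 hm
            rw [Multiset.mem_range] at hi
            have h1 : f' (r + 1 - 1 - i) ≤ f' 0 := hf' (Nat.zero_le _)
            omega
          · obtain ⟨j, hj, hval⟩ := Multiset.mem_map.1 hm
            rw [Multiset.mem_range] at hj
            have := hg'bound j hj
            omega
        have le2 : f' 0 ≤ f 0 := by
          have hmem : (f' 0 + 2 * r) ∈ rowA f (r + 1) + rowB g s t := by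
            rw [hEq]
            exact Multiset.mem_add.2 (Or.inl (by rw [rowA_succ]; exact Multiset.mem_cons_self _ _))
          rcases Multiset.mem_add.1 hmem with hm | hm
          · obtain ⟨i, hi, hval⟩ := Multiset.mem_map.1 hm
            rw [Multiset.mem_range] at hi
            have h1 : f (r + 1 - 1 - i) ≤ f 0 := hf (Nat.zero_le _)
            omega
          · obtain ⟨j, hj, hval⟩ := Multiset.mem_map.1 hm
            rw [Multiset.mem_range] at hj
            have := hgbound j hj
            omega
        omega
      rw [rowA_succ f r, rowA_succ f' r, Multiset.cons_add, Multiset.cons_add, h00] at hEq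
      have htail : rowA (fun i => f (i + 1)) r + rowB g s t
          = rowA (fun i => f' (i + 1)) r + rowB g' s t :=
        (Multiset.cons_inj_right _).mp hEq
      have e1 : ∑ i ∈ Finset.range (r + 1), f i
          = (∑ i ∈ Finset.range r, f (i + 1)) + f 0 := Finset.sum_range_succ' f r
      have e2 : ∑ i ∈ Finset.range (r + 1), f' i
          = (∑ i ∈ Finset.range r, f' (i + 1)) + f' 0 := Finset.sum_range_succ' f' r
      have ihres := ih (n - f' 0) (fun i => f (i + 1)) g (fun i => f' (i + 1)) g'
        (antitone_shift hf) hg (antitone_shift hf') hg'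
        (show (∑ i ∈ Finset.range r, f (i + 1)) + (∑ j ∈ Finset.range s, g j) = n - f' 0 by omega)
        (show (∑ i ∈ Finset.range r, f' (i + 1)) + (∑ j ∈ Finset.range s, g' j) = n - f' 0 by omega)
        (by omega) htail
      refine ⟨fun i hi => ?_, ihres.2⟩
      match i with
      | 0 => exact h00
      | (j + 1) => exact ihres.1 j (by omega)

lemma zero_beyond {h : ℕ → ℕ} (hh : Antitone h) {N n : ℕ}
    (h0 : ∀ i, N ≤ i → h i = 0) (hle : ∑ i ∈ Finset.range N, h i ≤ n) :
    ∀ i, n ≤ i → h i = 0 := by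
  intro i hi
  by_contra hne
  have h1 : 1 ≤ h i := by omega
  have hiN : i < N := by
    by_contra hh2
    exact hne (h0 i (by omega))
  have h2 : (i + 1) ≤ ∑ j ∈ Finset.range (i + 1), h j := by
    calc i + 1 = ∑ _j ∈ Finset.range (i + 1), 1 := by simp
    _ ≤ ∑ j ∈ Finset.range (i + 1), h j :=
        Finset.sum_le_sum fun j hj => le_trans h1 (hh (by rw [Finset.mem_range] at hj; omega))
  have h3 : ∑ j ∈ Finset.range (i + 1), h j ≤ ∑ j ∈ Finset.range N, h j :=
    Finset.sum_le_sum_of_subset (Finset.range_subset_range.2 (by omega))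
  omega

lemma sum_range_ext {h : ℕ → ℕ} {n : ℕ} (hz : ∀ i, n ≤ i → h i = 0) {w : ℕ} (hw : n ≤ w) :
    ∑ i ∈ Finset.range w, h i = ∑ i ∈ Finset.range n, h i :=
  (Finset.sum_subset (Finset.range_subset_range.2 hw)
    (fun x _ hx => hz x (by rw [Finset.mem_range] at hx; omega))).symm

lemma bip_facts {n : ℕ} {f g : ℕ → ℕ} (h : IsBipartitionOf n f g) :
    (∀ i, n ≤ i → f i = 0) ∧ (∀ i, n ≤ i → g i = 0) ∧
    ∀ w, n ≤ w → (∑ i ∈ Finset.range w, f i) + (∑ j ∈ Finset.range n, g j) = n := by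
  obtain ⟨hf, hg, N, hz, hsum⟩ := h
  have zf : ∀ i, n ≤ i → f i = 0 :=
    zero_beyond hf (fun i hi => (hz i hi).1) (by omega)
  have zg : ∀ i, n ≤ i → g i = 0 :=
    zero_beyond hg (fun i hi => (hz i hi).2) (by omega)
  refine ⟨zf, zg, fun w hw => ?_⟩
  have e1 : ∑ i ∈ Finset.range w, f i = ∑ i ∈ Finset.range n, f i := sum_range_ext zf hw
  have e2 : ∑ i ∈ Finset.range N, f i = ∑ i ∈ Finset.range n, f i := by
    rcases le_or_gt n N with hc | hc
    · exact sum_range_ext zf hc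
    · exact (Finset.sum_subset (Finset.range_subset_range.2 hc.le)
        (fun x _ hx => (hz x (by rw [Finset.mem_range] at hx; omega)).1))
  have e3 : ∑ i ∈ Finset.range N, g i = ∑ i ∈ Finset.range n, g i := by
    rcases le_or_gt n N with hc | hc
    · exact sum_range_ext zg hc
    · exact (Finset.sum_subset (Finset.range_subset_range.2 hc.le)
        (fun x _ hx => (hz x (by rw [Finset.mem_range] at hx; omega)).2))
  omega

/-- common core: symbol equality (in `rowA`/`rowB` form) forces equality. -/
lemma core (n r t : ℕ) (hr : n ≤ r) (hinv : 2 * n + 2 * n + t ≤ 2 * r + 1)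
    (xi eta xi' eta' : ℕ → ℕ)
    (h1 : IsBipartitionOf n xi eta) (h2 : IsBipartitionOf n xi' eta')
    (hEq : rowA xi r + rowB eta n t = rowA xi' r + rowB eta' n t) :
    xi = xi' ∧ eta = eta' := by
  obtain ⟨zf, zg, hsums⟩ := bip_facts h1
  obtain ⟨zf', zg', hsums'⟩ := bip_facts h2
  have hmain := rows_inj t n r n xi eta xi' eta' h1.1 h1.2.1 h2.1 h2.2.1
    (hsums r hr) (hsums' r hr) hinv hEq
  constructor
  · funext i
    rcases lt_or_ge i r with hc | hc
    · exact hmain.1 i hc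
    · rw [zf i (by omega), zf' i (by omega)]
  · funext j
    rcases lt_or_ge j n with hc | hc
    · exact hmain.2 j hc
    · rw [zg j hc, zg' j hc]

lemma symbM_eq (k : ℕ) (f g : ℕ → ℕ) (n : ℕ) :
    symbM k f g n = rowA f (n + k) + rowB g n 0 := by
  unfold symbM rowA rowB
  congr 1

lemma symbMhalf_eq (k : ℕ) (f g : ℕ → ℕ) (n : ℕ) :
    symbMhalf k f g n = rowA f (n + k + 1) + rowB g n 1 := by
  unfold symbMhalf rowA rowB
  congr 1

/-- for `n ≥ 1` and `m ≥ 0` with `2m ∈ ℤ` and `m > n - 1`,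
every similarity class of bipartitions of `n` under `∼_m` is a singleton:
two bipartitions of `n` with the same `m`-symbol are equal. -/
theorem stmt15 (n : ℕ) (hn : 1 ≤ n) (m : ℝ) (hm0 : 0 ≤ m)
    (h2m : ∃ c : ℤ, 2 * m = (c : ℝ)) (hbig : (n : ℝ) - 1 < m)
    (xi eta xi' eta' : ℕ → ℕ)
    (h1 : IsBipartitionOf n xi eta) (h2 : IsBipartitionOf n xi' eta')
    (hsim :
      (∀ k : ℕ, m = (k : ℝ) → symbM k xi eta n = symbM k xi' eta' n) ∧
      (∀ k : ℕ, m = (k : ℝ) + 1/2 →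
        symbMhalf k xi eta n = symbMhalf k xi' eta' n)) :
    xi = xi' ∧ eta = eta' := by
  obtain ⟨c, hc⟩ := h2m
  have hc0 : 0 ≤ c := by
    have h : (0 : ℝ) ≤ (c : ℝ) := by rw [← hc]; linarith
    exact_mod_cast h
  have hck : ((c.toNat : ℕ) : ℝ) = 2 * m := by
    rw [hc]
    exact_mod_cast congrArg (fun z : ℤ => (z : ℝ)) (Int.toNat_of_nonneg hc0)
  rcases Nat.even_or_odd c.toNat with ⟨k, hk⟩ | ⟨k, hk⟩
  · have hmk : m = (k : ℝ) := by
      rw [hk] at hck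
      push_cast at hck
      linarith
    have hkn : n ≤ k := by
      have h : (n : ℝ) < (k : ℝ) + 1 := by rw [hmk] at hbig; linarith
      have h2 : (n : ℕ) < k + 1 := by exact_mod_cast h
      omega
    have hS := hsim.1 k hmk
    rw [symbM_eq, symbM_eq] at hS
    exact core n (n + k) 0 (by omega) (by omega) xi eta xi' eta' h1 h2 hS
  · have hmk : m = (k : ℝ) + 1 / 2 := by
      rw [hk] at hck
      push_cast at hck
      linarith
    have hkn : n ≤ k + 1 := by
      have h : (n : ℝ) < (k : ℝ) + 2 := by rw [hmk] at hbig; linarith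
      have h2 : (n : ℕ) < k + 2 := by exact_mod_cast h
      omega
    have hS := hsim.2 k hmk
    rw [symbMhalf_eq, symbMhalf_eq] at hS
    exact core n (n + k + 1) 1 (by omega) (by omega) xi eta xi' eta' h1 h2 hS
end

section
/- Let m ≥ 1 be an integer and let λ₀ be a nonempty partition of n whose m-tableau T_m(λ₀) is residual, with full jump set J = {j_1 < j_2 < … < j_{m+2r}}. Then the sequences ξ° = (j_1, j_3, …, j_{2r+1}, j_{2r+2} − 1, j_{2r+3} − 2, …, j_{2r+m} − (m−1)) and η° = (j_2 + 1, j_4 + 1, …, j_{2r} + 1) are weakly increasing sequences of nonnegative integers, and |ξ°| + |η°| = n; that is, (ξ°, η°) is a bipartition of n. -/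
open scoped Classical

/-- For an integer `m ≥ 0`, the multiplicity `M_l` of the entry `l ∈ ℕ` in the
`m`-tableau `T_m(λ)`: the number of boxes `(i,j)` (0-indexed, `j < lam i`)
whose entry `|i - j + m|` equals `l`. -/
noncomputable def MmultN (lam : ℕ → ℕ) (m : ℕ) (l : ℕ) : ℕ :=
  Set.ncard {p : ℕ × ℕ | p.2 < lam p.1 ∧ ((p.1 : ℤ) - (p.2 : ℤ) + m).natAbs = l}

/-- The `m`-tableau of `lam` is residual (integer `m ≥ 0`). -/
def ResidualN (lam : ℕ → ℕ) (m : ℕ) : Prop :=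
  (∀ l : ℕ, max m 1 ≤ l →
      MmultN lam m (l + 1) ≤ MmultN lam m l ∧
      MmultN lam m l ≤ MmultN lam m (l + 1) + 1) ∧
  (∀ l : ℕ, 1 ≤ l → l + 1 ≤ m →
      MmultN lam m l ≤ MmultN lam m (l + 1) ∧
      MmultN lam m (l + 1) ≤ MmultN lam m l + 1) ∧
  (if m = 0 then MmultN lam m 0 = (MmultN lam m 1 + 1) / 2
   else MmultN lam m 0 = MmultN lam m 1 / 2)

/-- The set `J⁺` of positive jumps of a residual `m`-tableau (integer `m`). -/
def JposN (lam : ℕ → ℕ) (m : ℕ) : Set ℕ :=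
  {l : ℕ | 0 < l ∧
    ((m ≤ l ∧ MmultN lam m l = MmultN lam m (l + 1) + 1) ∨
     (l + 1 ≤ m ∧ MmultN lam m l = MmultN lam m (l + 1)))}

/-- The full jump set `J` (integer `m`): `J⁺`, together with the extra
element `0` added exactly when `|J⁺| ≢ m (mod 2)`. -/
noncomputable def JfullN (lam : ℕ → ℕ) (m : ℕ) : Set ℕ :=
  if Set.ncard (JposN lam m) % 2 = m % 2 then JposN lam m
  else insert 0 (JposN lam m)

/-- The sequence `ξ° = (j_1, j_3, …, j_{2r+1}, j_{2r+2} - 1, …,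
j_{2r+m} - (m-1))`, recorded with integer values in weakly decreasing order
(so `xi0z 0` is the largest entry `j_{m+2r} - (m-1)`); here `j : ℕ → ℕ`,
0-indexed and increasing, enumerates the full jump set. -/
def xi0z (m r : ℕ) (j : ℕ → ℕ) : ℕ → ℤ := fun t =>
  if t + 1 < m then (j (2 * r + m - 1 - t) : ℤ) - ((m : ℤ) - 1 - (t : ℤ))
  else if t < m + r then (j (2 * r + 2 * m - 2 - 2 * t) : ℤ)
  else 0

/-- The sequence `η° = (j_2 + 1, j_4 + 1, …, j_{2r} + 1)`, recorded with
integer values in weakly decreasing order. -/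
def eta0z (r : ℕ) (j : ℕ → ℕ) : ℕ → ℤ := fun t =>
  if t < r then (j (2 * r - 1 - 2 * t) : ℤ) + 1 else 0

/-- Downward induction from a threshold `L`. -/
private lemma nat_downward {P : ℕ → Prop} (L : ℕ) (base : ∀ l, L ≤ l → P l)
    (step : ∀ l, l < L → P (l + 1) → P l) : ∀ l, P l := by
  have key : ∀ d l, L ≤ l + d → P l := by
    intro d
    induction d with
    | zero => exact fun l h => base l (by omega)
    | succ d ih =>
      intro l h
      by_cases hl : L ≤ l
      · exact base l hl
      · exact step l (by omega) (ih (l + 1) (by omega))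
  exact fun l => key L l (by omega)

/-- The multiplicities are a fiberwise count of the (finitely many) boxes:
they vanish above `L` and sum to `n`. -/
private lemma mmult_sum (lam : ℕ → ℕ) (m n N L : ℕ) (hanti : Antitone lam)
    (hN : ∀ i, N ≤ i → lam i = 0) (hsum : ∑ i ∈ Finset.range N, lam i = n)
    (hL : N + lam 0 + m < L) :
    (∀ l, L ≤ l → MmultN lam m l = 0) ∧
      ∑ l ∈ Finset.range L, MmultN lam m l = n := by
  classical
  set B : Finset (ℕ × ℕ) :=
    (Finset.range N).biUnion (fun i => ({i} : Finset ℕ) ×ˢ Finset.range (lam i)) with hB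
  have memB : ∀ p : ℕ × ℕ, p ∈ B ↔ p.2 < lam p.1 := by
    intro p
    simp only [hB, Finset.mem_biUnion, Finset.mem_product, Finset.mem_singleton,
      Finset.mem_range]
    constructor
    · rintro ⟨i, hi, h1, h2⟩
      rw [h1]; exact h2
    · intro h
      refine ⟨p.1, ?_, rfl, h⟩
      by_contra hc
      rw [hN p.1 (by omega)] at h; omega
  have cardB : B.card = n := by
    rw [hB, Finset.card_biUnion]
    · rw [← hsum]
      refine Finset.sum_congr rfl fun i _ => ?_
      rw [Finset.card_product, Finset.card_singleton, Finset.card_range, one_mul]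
    · intro x hx y hy hxy
      simp only [Finset.disjoint_left, Finset.mem_product, Finset.mem_singleton]
      rintro p ⟨h1, _⟩ ⟨h2, _⟩
      exact hxy (h1 ▸ h2 ▸ rfl)
  have Mfib : ∀ l, MmultN lam m l =
      (B.filter (fun p => ((p.1 : ℤ) - (p.2 : ℤ) + m).natAbs = l)).card := by
    intro l
    rw [MmultN, ← Set.ncard_coe_finset]
    congr 1
    ext p
    simp only [Finset.coe_filter, Set.mem_setOf_eq, memB]
  have entry_lt : ∀ p ∈ B, ((p.1 : ℤ) - (p.2 : ℤ) + m).natAbs < L := by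
    intro p hp
    have h2 := (memB p).1 hp
    have h1 : p.1 < N := by
      by_contra hc
      rw [hN p.1 (by omega)] at h2; omega
    have h3 : lam p.1 ≤ lam 0 := hanti (Nat.zero_le _)
    omega
  constructor
  · intro l hl
    rw [Mfib l, Finset.card_eq_zero, Finset.filter_eq_empty_iff]
    intro p hp
    have := entry_lt p hp
    omega
  · have hkey := Finset.card_eq_sum_card_fiberwise
      (f := fun p : ℕ × ℕ => ((p.1 : ℤ) - (p.2 : ℤ) + m).natAbs) (s := B)
      (t := Finset.range L) (fun p hp => Finset.mem_range.mpr (entry_lt p hp))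
    rw [cardB] at hkey
    exact (Finset.sum_congr rfl fun l _ => Mfib l).trans hkey.symm

/-- Splitting a sum over `range (2r+1)` into even and odd indices. -/
private lemma even_odd_sum (g : ℕ → ℤ) (r : ℕ) :
    ∑ s ∈ Finset.range (r + 1), g (2 * s) + ∑ s ∈ Finset.range r, g (2 * s + 1) =
      ∑ t ∈ Finset.range (2 * r + 1), g t := by
  induction r with
  | zero => simp
  | succ r ih =>
    have hR : ∑ t ∈ Finset.range (2 * (r + 1) + 1), g t
        = ∑ t ∈ Finset.range (2 * r + 1), g t + g (2 * r + 1) + g (2 * r + 2) := by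
      have h : 2 * (r + 1) + 1 = (2 * r + 1) + 1 + 1 := by ring
      rw [h, Finset.sum_range_succ, Finset.sum_range_succ]
    rw [hR, Finset.sum_range_succ (fun s => g (2 * s)) (r + 1),
      Finset.sum_range_succ (fun s => g (2 * s + 1)) r, ← ih]
    have h2 : 2 * (r + 1) = 2 * r + 2 := by ring
    rw [h2]; ring

/-- for an integer `m ≥ 1` and a nonempty partition `lam0` of
`n` whose `m`-tableau is residual with full jump set
`J = {j_1 < … < j_{m+2r}}`, the sequences `ξ°` and `η°` are weakly monotone
sequences of nonnegative integers whose weights add up to `n`; i.e.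
`(ξ°, η°)` is a bipartition of `n`. -/
theorem stmt17 (m : ℕ) (hm : 1 ≤ m) (n r : ℕ) (hn : 1 ≤ n)
    (lam0 : ℕ → ℕ) (hlam0 : IsPartitionOf lam0 n) (hres : ResidualN lam0 m)
    (j : ℕ → ℕ)
    (hmono : ∀ a b, a < b → b < m + 2 * r → j a < j b)
    (hrange : JfullN lam0 m = {x : ℕ | ∃ i, i < m + 2 * r ∧ j i = x}) :
    Antitone (xi0z m r j) ∧ Antitone (eta0z r j) ∧
    (∀ t, 0 ≤ xi0z m r j t) ∧ (∀ t, 0 ≤ eta0z r j t) ∧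
    (∑ᶠ t : ℕ, xi0z m r j t) + (∑ᶠ t : ℕ, eta0z r j t) = (n : ℤ) := by
  classical
  -- growth of the enumeration
  have hji : ∀ i, i < m + 2 * r → i ≤ j i := by
    intro i
    induction i with
    | zero => intro _; exact Nat.zero_le _
    | succ i ih =>
      intro h
      have h1 := hmono i (i + 1) (by omega) h
      have h2 := ih (by omega)
      omega
  refine ⟨?_, ?_, ?_, ?_, ?_⟩
  · -- Antitone ξ
    apply antitone_nat_of_succ_le
    intro t
    simp only [xi0z]
    by_cases h1 : t + 1 + 1 < m
    · rw [if_pos h1, if_pos (by omega : t + 1 < m)]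
      have h := hmono (2 * r + m - 1 - (t + 1)) (2 * r + m - 1 - t) (by omega) (by omega)
      push_cast
      omega
    · rw [if_neg h1]
      by_cases h2 : t + 1 < m
      · rw [if_pos (by omega : t + 1 < m + r), if_pos h2]
        have h := hmono (2 * r + 2 * m - 2 - 2 * (t + 1)) (2 * r + m - 1 - t)
          (by omega) (by omega)
        push_cast
        omega
      · by_cases h3 : t + 1 < m + r
        · rw [if_pos h3, if_pos (by omega : t < m + r), if_neg (by omega : ¬ t + 1 < m)]
          have h := hmono (2 * r + 2 * m - 2 - 2 * (t + 1)) (2 * r + 2 * m - 2 - 2 * t)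
            (by omega) (by omega)
          push_cast
          omega
        · rw [if_neg h3]
          by_cases h4 : t < m + r
          · rw [if_pos h4, if_neg (by omega : ¬ t + 1 < m)]
            omega
          · rw [if_neg h4, if_neg (by omega : ¬ t + 1 < m)]
  · -- Antitone η
    apply antitone_nat_of_succ_le
    intro t
    simp only [eta0z]
    by_cases h1 : t + 1 < r
    · rw [if_pos h1, if_pos (by omega : t < r)]
      have h := hmono (2 * r - 1 - 2 * (t + 1)) (2 * r - 1 - 2 * t) (by omega) (by omega)
      omega
    · rw [if_neg h1]
      by_cases h2 : t < r
      · rw [if_pos h2]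
        omega
      · rw [if_neg h2]
  · -- ξ nonneg
    intro t
    simp only [xi0z]
    by_cases h1 : t + 1 < m
    · rw [if_pos h1]
      have h := hji (2 * r + m - 1 - t) (by omega)
      push_cast
      omega
    · rw [if_neg h1]
      by_cases h2 : t < m + r
      · rw [if_pos h2]; omega
      · rw [if_neg h2]
  · -- η nonneg
    intro t
    simp only [eta0z]
    by_cases h1 : t < r
    · rw [if_pos h1]; omega
    · rw [if_neg h1]
  · -- the weight identity
    obtain ⟨hanti, N, hN, hsum⟩ := hlam0
    obtain ⟨hres1, hres2, hres3⟩ := hres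
    obtain ⟨L, hmL, hLzero, hLsum⟩ : ∃ L, m + 1 ≤ L ∧
        (∀ l, L ≤ l → MmultN lam0 m l = 0) ∧
        ∑ l ∈ Finset.range L, MmultN lam0 m l = n := by
      obtain ⟨h1, h2⟩ := mmult_sum lam0 m n N (N + lam0 0 + m + 1) hanti hN hsum (by omega)
      exact ⟨N + lam0 0 + m + 1, by omega, h1, h2⟩
    have hposL : ∀ k, k ∈ JposN lam0 m → k < L := by
      intro k hk
      obtain ⟨hk0, hk1 | hk2⟩ := hk
      · by_contra hc
        have h1 := hLzero k (by omega)
        have h2 := hLzero (k + 1) (by omega)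
        omega
      · omega
    set Jfin : Finset ℕ := (Finset.range L).filter (fun k => k ∈ JposN lam0 m) with hJdef
    have hmemJ : ∀ k, k ∈ Jfin ↔ k ∈ JposN lam0 m := by
      intro k
      simp only [hJdef, Finset.mem_filter, Finset.mem_range]
      exact ⟨fun h => h.2, fun h => ⟨hposL k h, h⟩⟩
    have hJcoe : JposN lam0 m = ↑Jfin := by
      ext k; rw [Finset.mem_coe, hmemJ]
    have hpos : ∀ k ∈ Jfin, 0 < k := fun k hk => ((hmemJ k).1 hk).1
    have hkL : ∀ k ∈ Jfin, k < L := fun k hk => hposL k ((hmemJ k).1 hk)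
    have h0J : (0 : ℕ) ∉ Jfin := fun h => by have := hpos 0 h; omega
    have hjumpHi : ∀ l, m ≤ l → l < L →
        MmultN lam0 m l = MmultN lam0 m (l + 1) + (if l ∈ Jfin then 1 else 0) := by
      intro l hml hlL
      have h := hres1 l (by omega)
      by_cases hj : l ∈ Jfin
      · rw [if_pos hj]
        obtain ⟨_, hc | hc⟩ := (hmemJ l).1 hj
        · exact hc.2
        · omega
      · rw [if_neg hj]
        by_contra hc
        exact hj ((hmemJ l).2 ⟨by omega, Or.inl ⟨hml, by omega⟩⟩)
    have hjumpLo : ∀ l, 1 ≤ l → l < m →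
        MmultN lam0 m (l + 1) = MmultN lam0 m l + (if l ∈ Jfin then 0 else 1) := by
      intro l h1 h2
      have h := hres2 l h1 (by omega)
      by_cases hj : l ∈ Jfin
      · rw [if_pos hj]
        obtain ⟨_, hc | hc⟩ := (hmemJ l).1 hj
        · omega
        · omega
      · rw [if_neg hj]
        by_contra hc
        exact hj ((hmemJ l).2 ⟨h1, Or.inr ⟨by omega, by omega⟩⟩)
    have habove : ∀ l, m ≤ l → MmultN lam0 m l = (Jfin.filter (fun k => l ≤ k)).card := by
      refine nat_downward L (fun l hl hml => ?_) (fun l hl ih hml => ?_)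
      · rw [hLzero l hl]
        symm
        rw [Finset.card_eq_zero, Finset.filter_eq_empty_iff]
        intro k hk
        have := hkL k hk
        omega
      · have key := hjumpHi l hml hl
        have hu : Jfin.filter (fun k => l ≤ k)
            = Jfin.filter (fun k => l + 1 ≤ k) ∪ Jfin.filter (fun k => k = l) := by
          ext x
          simp only [Finset.mem_filter, Finset.mem_union]
          constructor
          · rintro ⟨hx, hlx⟩
            by_cases hxl : x = l
            · exact Or.inr ⟨hx, hxl⟩
            · exact Or.inl ⟨hx, by omega⟩
          · rintro (⟨hx, h'⟩ | ⟨hx, h'⟩)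
            · exact ⟨hx, by omega⟩
            · exact ⟨hx, by omega⟩
        have hdisj : Disjoint (Jfin.filter (fun k => l + 1 ≤ k))
            (Jfin.filter (fun k => k = l)) := by
          simp only [Finset.disjoint_left, Finset.mem_filter]
          rintro x ⟨_, hx⟩ ⟨_, rfl⟩
          omega
        have hcard : (Jfin.filter (fun k => l ≤ k)).card
            = (Jfin.filter (fun k => l + 1 ≤ k)).card + (if l ∈ Jfin then 1 else 0) := by
          rw [hu, Finset.card_union_of_disjoint hdisj, Finset.filter_eq']
          by_cases hj : l ∈ Jfin
          · rw [if_pos hj, if_pos hj, Finset.card_singleton]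
          · rw [if_neg hj, if_neg hj, Finset.card_empty]
        have ihv := ih (by omega)
        by_cases hj : l ∈ Jfin
        · rw [if_pos hj] at key hcard; omega
        · rw [if_neg hj] at key hcard; omega
    have hbelow : ∀ l, 1 ≤ l → l ≤ m →
        MmultN lam0 m l + ((Finset.Ico l m).filter (fun k => k ∉ Jfin)).card
          = MmultN lam0 m m := by
      refine nat_downward m (fun l hl h1 h2 => ?_) (fun l hl ih h1 h2 => ?_)
      · have : l = m := by omega
        subst this
        simp
      · have key := hjumpLo l h1 hl
        have ihv := ih (by omega) (by omega)
        have hstep : ((Finset.Ico l m).filter (fun k => k ∉ Jfin)).card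
            = ((Finset.Ico (l + 1) m).filter (fun k => k ∉ Jfin)).card
              + (if l ∈ Jfin then 0 else 1) := by
          by_cases hj : l ∈ Jfin
          · rw [if_pos hj, add_zero]
            congr 1
            ext x
            simp only [Finset.mem_filter, Finset.mem_Ico]
            constructor
            · rintro ⟨⟨ha, hb⟩, hc⟩
              have hxl : x ≠ l := fun h' => hc (h' ▸ hj)
              exact ⟨⟨by omega, hb⟩, hc⟩
            · rintro ⟨⟨ha, hb⟩, hc⟩
              exact ⟨⟨by omega, hb⟩, hc⟩
          · rw [if_neg hj]
            have he : (Finset.Ico l m).filter (fun k => k ∉ Jfin)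
                = insert l ((Finset.Ico (l + 1) m).filter (fun k => k ∉ Jfin)) := by
              ext x
              simp only [Finset.mem_filter, Finset.mem_Ico, Finset.mem_insert]
              constructor
              · rintro ⟨⟨ha, hb⟩, hc⟩
                by_cases hxl : x = l
                · exact Or.inl hxl
                · exact Or.inr ⟨⟨by omega, hb⟩, hc⟩
              · rintro (hxl | ⟨⟨ha, hb⟩, hc⟩)
                · subst hxl
                  exact ⟨⟨le_refl x, hl⟩, hj⟩
                · exact ⟨⟨by omega, hb⟩, hc⟩
            rw [he, Finset.card_insert_of_notMem (by
              simp only [Finset.mem_filter, Finset.mem_Ico]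
              rintro ⟨⟨ha, _⟩, _⟩
              omega)]
        by_cases hj : l ∈ Jfin
        · rw [if_pos hj] at key hstep; omega
        · rw [if_neg hj] at key hstep; omega
    have hMm : MmultN lam0 m m = (Jfin.filter (fun k => m ≤ k)).card := habove m le_rfl
    have hS2 : ∑ l ∈ Finset.Ico m L, MmultN lam0 m l = ∑ k ∈ Jfin, (k + 1 - m) := by
      calc ∑ l ∈ Finset.Ico m L, MmultN lam0 m l
          = ∑ l ∈ Finset.Ico m L, (Jfin.filter (fun k => l ≤ k)).card :=
            Finset.sum_congr rfl fun l hl => habove l (Finset.mem_Ico.1 hl).1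
        _ = ∑ l ∈ Finset.Ico m L, ∑ k ∈ Jfin, (if l ≤ k then 1 else 0) :=
            Finset.sum_congr rfl fun l _ => Finset.card_filter _ _
        _ = ∑ k ∈ Jfin, ∑ l ∈ Finset.Ico m L, (if l ≤ k then 1 else 0) := Finset.sum_comm
        _ = ∑ k ∈ Jfin, (k + 1 - m) := by
            refine Finset.sum_congr rfl fun k hk => ?_
            have hkL' := hkL k hk
            rw [← Finset.card_filter]
            have he : (Finset.Ico m L).filter (fun l => l ≤ k) = Finset.Ico m (k + 1) := by
              ext x
              simp only [Finset.mem_filter, Finset.mem_Ico]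
              omega
            rw [he, Nat.card_Ico]
    have hS1 : ∑ l ∈ Finset.Ico 1 m, MmultN lam0 m l
        + ∑ k ∈ (Finset.Ico 1 m).filter (fun k => k ∉ Jfin), k
        = (m - 1) * MmultN lam0 m m := by
      have h1 : ∑ l ∈ Finset.Ico 1 m,
          (MmultN lam0 m l + ((Finset.Ico l m).filter (fun k => k ∉ Jfin)).card)
          = ∑ _l ∈ Finset.Ico 1 m, MmultN lam0 m m := by
        refine Finset.sum_congr rfl fun l hl => ?_
        have hmem := Finset.mem_Ico.1 hl
        exact hbelow l hmem.1 (le_of_lt hmem.2)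
      rw [Finset.sum_add_distrib, Finset.sum_const, Nat.card_Ico, smul_eq_mul] at h1
      have hdc : ∑ l ∈ Finset.Ico 1 m, ((Finset.Ico l m).filter (fun k => k ∉ Jfin)).card
          = ∑ k ∈ (Finset.Ico 1 m).filter (fun k => k ∉ Jfin), k := by
        calc ∑ l ∈ Finset.Ico 1 m, ((Finset.Ico l m).filter (fun k => k ∉ Jfin)).card
            = ∑ l ∈ Finset.Ico 1 m, ∑ k ∈ Finset.Ico 1 m,
                (if l ≤ k ∧ k ∉ Jfin then 1 else 0) := by
              refine Finset.sum_congr rfl fun l hl => ?_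
              have hl1 := (Finset.mem_Ico.1 hl).1
              have he : (Finset.Ico l m).filter (fun k => k ∉ Jfin)
                  = (Finset.Ico 1 m).filter (fun k => l ≤ k ∧ k ∉ Jfin) := by
                ext x
                simp only [Finset.mem_filter, Finset.mem_Ico]
                constructor
                · rintro ⟨⟨ha, hb⟩, hc⟩
                  exact ⟨⟨by omega, hb⟩, ha, hc⟩
                · rintro ⟨⟨ha, hb⟩, hc, hd⟩
                  exact ⟨⟨hc, hb⟩, hd⟩
              rw [he, Finset.card_filter]
          _ = ∑ k ∈ Finset.Ico 1 m, ∑ l ∈ Finset.Ico 1 m,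
                (if l ≤ k ∧ k ∉ Jfin then 1 else 0) := Finset.sum_comm
          _ = ∑ k ∈ (Finset.Ico 1 m).filter (fun k => k ∉ Jfin), k := by
              rw [Finset.sum_filter]
              refine Finset.sum_congr rfl fun k hk => ?_
              have hkm := Finset.mem_Ico.1 hk
              by_cases hj : k ∉ Jfin
              · rw [if_pos hj]
                have hterm : ∀ l, (if l ≤ k ∧ k ∉ Jfin then (1 : ℕ) else 0)
                    = (if l ≤ k then 1 else 0) := fun l => by simp [hj]
                rw [Finset.sum_congr rfl fun l _ => hterm l, ← Finset.card_filter]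
                have he : (Finset.Ico 1 m).filter (fun l => l ≤ k) = Finset.Ico 1 (k + 1) := by
                  ext x
                  simp only [Finset.mem_filter, Finset.mem_Ico]
                  omega
                rw [he, Nat.card_Ico]
                omega
              · rw [if_neg hj]
                refine Finset.sum_eq_zero fun l _ => ?_
                rw [if_neg (by tauto)]
      rw [← hdc]
      exact h1
    have hM1 : MmultN lam0 m 1 + ((Finset.Ico 1 m).filter (fun k => k ∉ Jfin)).card
        = MmultN lam0 m m := hbelow 1 le_rfl hm
    have hIcoJ : (Finset.Ico 1 m).filter (fun k => k ∈ Jfin)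
        = Jfin.filter (fun k => ¬ m ≤ k) := by
      ext x
      simp only [Finset.mem_filter, Finset.mem_Ico, not_le]
      constructor
      · rintro ⟨⟨h1, h2⟩, h3⟩
        exact ⟨h3, h2⟩
      · rintro ⟨h1, h2⟩
        exact ⟨⟨hpos x h1, h2⟩, h1⟩
    have hIcoCard : ((Finset.Ico 1 m).filter (fun k => k ∈ Jfin)).card
        + ((Finset.Ico 1 m).filter (fun k => ¬ k ∈ Jfin)).card = m - 1 := by
      rw [Finset.card_filter_add_card_filter_not, Nat.card_Ico]
    have hJcard : (Jfin.filter (fun k => m ≤ k)).card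
        + (Jfin.filter (fun k => ¬ m ≤ k)).card = Jfin.card :=
      Finset.card_filter_add_card_filter_not _
    have himg : {x : ℕ | ∃ i, i < m + 2 * r ∧ j i = x}
        = ↑((Finset.range (m + 2 * r)).image j) := by
      ext x
      constructor
      · rintro ⟨i, h1, h2⟩
        exact Finset.mem_coe.2 (Finset.mem_image.2 ⟨i, Finset.mem_range.2 h1, h2⟩)
      · intro hx
        obtain ⟨i, hi, hji'⟩ := Finset.mem_image.1 (Finset.mem_coe.1 hx)
        exact ⟨i, Finset.mem_range.1 hi, hji'⟩
    have hinj : ∀ x ∈ Finset.range (m + 2 * r), ∀ y ∈ Finset.range (m + 2 * r),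
        j x = j y → x = y := by
      intro x hx y hy hxy
      simp only [Finset.mem_range] at hx hy
      by_contra hne
      rcases Nat.lt_or_ge x y with h | h
      · have := hmono x y h hy; omega
      · have hyx : y < x := by omega
        have := hmono y x hyx hx; omega
    have hcardimg : ((Finset.range (m + 2 * r)).image j).card = m + 2 * r := by
      rw [Finset.card_image_of_injOn (fun x hx y hy h => hinj x hx y hy h),
        Finset.card_range]
    have hsumimg : ∑ x ∈ (Finset.range (m + 2 * r)).image j, (x : ℤ)
        = ∑ t ∈ Finset.range (m + 2 * r), (j t : ℤ) := Finset.sum_image hinj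
    have hncard : Set.ncard (JposN lam0 m) = Jfin.card := by
      rw [hJcoe, Set.ncard_coe_finset]
    have hbc := congrArg Finset.card hIcoJ
    rw [if_neg (by omega : ¬ m = 0)] at hres3
    obtain ⟨hM0, hsumJZ⟩ : MmultN lam0 m 0 = r ∧
        ∑ k ∈ Jfin, (k : ℤ) = ∑ t ∈ Finset.range (m + 2 * r), (j t : ℤ) := by
      by_cases hc : Jfin.card % 2 = m % 2
      · have hfull : JfullN lam0 m = JposN lam0 m := by
          rw [JfullN, if_pos (by rw [hncard]; exact hc)]
        have heq : Jfin = (Finset.range (m + 2 * r)).image j := by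
          apply Finset.coe_injective
          rw [← hJcoe, ← hfull, hrange, himg]
        have hcardJ : Jfin.card = m + 2 * r := by rw [heq, hcardimg]
        refine ⟨by omega, ?_⟩
        rw [heq]
        exact hsumimg
      · have hfull : JfullN lam0 m = insert 0 (JposN lam0 m) := by
          rw [JfullN, if_neg (by rw [hncard]; exact hc)]
        have heq : insert 0 Jfin = (Finset.range (m + 2 * r)).image j := by
          apply Finset.coe_injective
          rw [Finset.coe_insert, ← hJcoe, ← hfull, hrange, himg]
        have hcardJ : Jfin.card + 1 = m + 2 * r := by
          rw [← Finset.card_insert_of_notMem h0J, heq, hcardimg]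
        refine ⟨by omega, ?_⟩
        rw [← hsumimg, ← heq, Finset.sum_insert h0J]
        simp
    have hTotal : MmultN lam0 m 0 + (∑ l ∈ Finset.Ico 1 m, MmultN lam0 m l
        + ∑ l ∈ Finset.Ico m L, MmultN lam0 m l) = n := by
      have e1 : ∑ l ∈ Finset.Ico 1 m, MmultN lam0 m l
          + ∑ l ∈ Finset.Ico m L, MmultN lam0 m l
          = ∑ l ∈ Finset.Ico 1 L, MmultN lam0 m l :=
        Finset.sum_Ico_consecutive _ (by omega) (by omega)
      have e2 : ∑ l ∈ Finset.Ico 0 1, MmultN lam0 m l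
          + ∑ l ∈ Finset.Ico 1 L, MmultN lam0 m l
          = ∑ l ∈ Finset.Ico 0 L, MmultN lam0 m l :=
        Finset.sum_Ico_consecutive _ (by omega) (by omega)
      have e3 : ∑ l ∈ Finset.Ico 0 L, MmultN lam0 m l = n := by
        rw [Nat.Ico_zero_eq_range]; exact hLsum
      have e4 : ∑ l ∈ Finset.Ico 0 1, MmultN lam0 m l = MmultN lam0 m 0 := by
        rw [Nat.Ico_zero_eq_range, Finset.sum_range_one]
      omega
    have hS2z : ((∑ l ∈ Finset.Ico m L, MmultN lam0 m l : ℕ) : ℤ)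
        = ∑ k ∈ Jfin.filter (fun k => m ≤ k), (k : ℤ)
          + ((Jfin.filter (fun k => m ≤ k)).card : ℤ) * (1 - (m : ℤ)) := by
      rw [hS2, Nat.cast_sum]
      rw [← Finset.sum_filter_add_sum_filter_not Jfin (fun k => m ≤ k)
        (fun k => ((k + 1 - m : ℕ) : ℤ))]
      have hA : ∑ k ∈ Jfin.filter (fun k => m ≤ k), ((k + 1 - m : ℕ) : ℤ)
          = ∑ k ∈ Jfin.filter (fun k => m ≤ k), ((k : ℤ) + (1 - (m : ℤ))) := by
        refine Finset.sum_congr rfl fun k hk => ?_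
        have := (Finset.mem_filter.1 hk).2
        omega
      have hB : ∑ k ∈ Jfin.filter (fun k => ¬ m ≤ k), ((k + 1 - m : ℕ) : ℤ) = 0 := by
        refine Finset.sum_eq_zero fun k hk => ?_
        have := (Finset.mem_filter.1 hk).2
        omega
      rw [hA, hB, Finset.sum_add_distrib, Finset.sum_const, nsmul_eq_mul]
      ring
    have hS1z : ((∑ l ∈ Finset.Ico 1 m, MmultN lam0 m l : ℕ) : ℤ)
        + ∑ k ∈ (Finset.Ico 1 m).filter (fun k => ¬ k ∈ Jfin), (k : ℤ)
        = ((m : ℤ) - 1) * ((Jfin.filter (fun k => m ≤ k)).card : ℤ) := by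
      have hS1' := hS1
      rw [hMm] at hS1'
      have h := congrArg (fun x : ℕ => (x : ℤ)) hS1'
      push_cast [Nat.cast_sub hm] at h
      push_cast [Nat.cast_sub hm]
      linarith [h]
    have hmaster : (n : ℤ) = ∑ t ∈ Finset.range (m + 2 * r), (j t : ℤ) + r
        - ∑ k ∈ Finset.Ico 1 m, (k : ℤ) := by
      have hz0 : ((MmultN lam0 m 0 : ℕ) : ℤ) = (r : ℤ) := by exact_mod_cast hM0
      have hzT : ((MmultN lam0 m 0 : ℕ) : ℤ)
          + (((∑ l ∈ Finset.Ico 1 m, MmultN lam0 m l : ℕ) : ℤ)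
            + ((∑ l ∈ Finset.Ico m L, MmultN lam0 m l : ℕ) : ℤ)) = (n : ℤ) := by
        exact_mod_cast hTotal
      have hsplitsum : ∑ k ∈ Jfin.filter (fun k => m ≤ k), (k : ℤ)
          + ∑ k ∈ Jfin.filter (fun k => ¬ m ≤ k), (k : ℤ) = ∑ k ∈ Jfin, (k : ℤ) :=
        Finset.sum_filter_add_sum_filter_not _ _ _
      have hsplitIco : ∑ k ∈ (Finset.Ico 1 m).filter (fun k => k ∈ Jfin), (k : ℤ)
          + ∑ k ∈ (Finset.Ico 1 m).filter (fun k => ¬ k ∈ Jfin), (k : ℤ)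
          = ∑ k ∈ Finset.Ico 1 m, (k : ℤ) :=
        Finset.sum_filter_add_sum_filter_not _ _ _
      have hBsum : ∑ k ∈ (Finset.Ico 1 m).filter (fun k => k ∈ Jfin), (k : ℤ)
          = ∑ k ∈ Jfin.filter (fun k => ¬ m ≤ k), (k : ℤ) := by rw [hIcoJ]
      have hcancel : ((m : ℤ) - 1) * ((Jfin.filter (fun k => m ≤ k)).card : ℤ)
          + ((Jfin.filter (fun k => m ≤ k)).card : ℤ) * (1 - (m : ℤ)) = 0 := by ring
      linarith [hS1z, hS2z, hsplitsum, hsplitIco, hBsum, hsumJZ, hcancel, hz0, hzT]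
    have hxisupp : Function.support (xi0z m r j) ⊆ ↑(Finset.range (m + r)) := by
      intro t ht
      rw [Finset.coe_range, Set.mem_Iio]
      by_contra hc
      apply ht
      simp only [xi0z]
      rw [if_neg (by omega), if_neg (by omega)]
    have hetasupp : Function.support (eta0z r j) ⊆ ↑(Finset.range r) := by
      intro t ht
      rw [Finset.coe_range, Set.mem_Iio]
      by_contra hc
      apply ht
      simp only [eta0z]
      rw [if_neg (by omega)]
    rw [finsum_eq_sum_of_support_subset _ hxisupp,
      finsum_eq_sum_of_support_subset _ hetasupp]
    have hxi1 : ∑ t ∈ Finset.range (m + r), xi0z m r j t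
        = ∑ t ∈ Finset.range (m - 1), xi0z m r j t
          + ∑ t ∈ Finset.Ico (m - 1) (m + r), xi0z m r j t := by
      have h := Finset.sum_Ico_consecutive (xi0z m r j) (Nat.zero_le (m - 1))
        (by omega : m - 1 ≤ m + r)
      simp only [Nat.Ico_zero_eq_range] at h
      exact h.symm
    have hxiA : ∑ t ∈ Finset.range (m - 1), xi0z m r j t
        = ∑ t ∈ Finset.range (m - 1), ((j (2 * r + m - 1 - t) : ℤ) - ((m : ℤ) - 1 - t)) := by
      refine Finset.sum_congr rfl fun t ht => ?_
      have := Finset.mem_range.1 ht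
      simp only [xi0z]
      rw [if_pos (by omega)]
    have hxiA2 : ∑ t ∈ Finset.range (m - 1),
          ((j (2 * r + m - 1 - t) : ℤ) - ((m : ℤ) - 1 - t))
        = ∑ u ∈ Finset.Ico (2 * r + 1) (2 * r + m), (j u : ℤ)
          - ∑ k ∈ Finset.Ico 1 m, (k : ℤ) := by
      rw [Finset.sum_sub_distrib]
      congr 1
      · rw [Finset.sum_Ico_eq_sum_range]
        have h2 : 2 * r + m - (2 * r + 1) = m - 1 := by omega
        rw [h2]
        calc ∑ t ∈ Finset.range (m - 1), (j (2 * r + m - 1 - t) : ℤ)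
            = ∑ t ∈ Finset.range (m - 1), (j (2 * r + 1 + ((m - 1) - 1 - t)) : ℤ) := by
              refine Finset.sum_congr rfl fun t ht => ?_
              have := Finset.mem_range.1 ht
              have hAB : 2 * r + m - 1 - t = 2 * r + 1 + ((m - 1) - 1 - t) := by omega
              rw [hAB]
          _ = ∑ i ∈ Finset.range (m - 1), (j (2 * r + 1 + i) : ℤ) :=
              Finset.sum_range_reflect (fun i => (j (2 * r + 1 + i) : ℤ)) (m - 1)
      · rw [Finset.sum_Ico_eq_sum_range]
        calc ∑ t ∈ Finset.range (m - 1), ((m : ℤ) - 1 - t)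
            = ∑ t ∈ Finset.range (m - 1), ((1 + ((m - 1) - 1 - t) : ℕ) : ℤ) := by
              refine Finset.sum_congr rfl fun t ht => ?_
              have := Finset.mem_range.1 ht
              omega
          _ = ∑ i ∈ Finset.range (m - 1), ((1 + i : ℕ) : ℤ) :=
              Finset.sum_range_reflect (fun i => ((1 + i : ℕ) : ℤ)) (m - 1)
    have hxiB : ∑ t ∈ Finset.Ico (m - 1) (m + r), xi0z m r j t
        = ∑ s ∈ Finset.range (r + 1), (j (2 * s) : ℤ) := by
      have h1 : ∑ t ∈ Finset.Ico (m - 1) (m + r), xi0z m r j t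
          = ∑ t ∈ Finset.Ico (m - 1) (m + r), (j (2 * r + 2 * m - 2 - 2 * t) : ℤ) := by
        refine Finset.sum_congr rfl fun t ht => ?_
        have := Finset.mem_Ico.1 ht
        simp only [xi0z]
        rw [if_neg (by omega), if_pos (by omega)]
      rw [h1, Finset.sum_Ico_eq_sum_range]
      have h2 : m + r - (m - 1) = r + 1 := by omega
      rw [h2]
      calc ∑ i ∈ Finset.range (r + 1), (j (2 * r + 2 * m - 2 - 2 * (m - 1 + i)) : ℤ)
          = ∑ i ∈ Finset.range (r + 1), (j (2 * ((r + 1) - 1 - i)) : ℤ) := by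
            refine Finset.sum_congr rfl fun i hi => ?_
            have := Finset.mem_range.1 hi
            have hAB : 2 * r + 2 * m - 2 - 2 * (m - 1 + i) = 2 * ((r + 1) - 1 - i) := by
              omega
            rw [hAB]
        _ = ∑ s ∈ Finset.range (r + 1), (j (2 * s) : ℤ) :=
            Finset.sum_range_reflect (fun s => (j (2 * s) : ℤ)) (r + 1)
    have hetaA : ∑ t ∈ Finset.range r, eta0z r j t
        = ∑ s ∈ Finset.range r, (j (2 * s + 1) : ℤ) + r := by
      have h1 : ∑ t ∈ Finset.range r, eta0z r j t
          = ∑ t ∈ Finset.range r, ((j (2 * r - 1 - 2 * t) : ℤ) + 1) := by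
        refine Finset.sum_congr rfl fun t ht => ?_
        have := Finset.mem_range.1 ht
        simp only [eta0z]
        rw [if_pos (by omega)]
      rw [h1, Finset.sum_add_distrib, Finset.sum_const, Finset.card_range, nsmul_eq_mul,
        mul_one]
      congr 1
      calc ∑ t ∈ Finset.range r, (j (2 * r - 1 - 2 * t) : ℤ)
          = ∑ t ∈ Finset.range r, (j (2 * (r - 1 - t) + 1) : ℤ) := by
            refine Finset.sum_congr rfl fun t ht => ?_
            have := Finset.mem_range.1 ht
            have hAB : 2 * r - 1 - 2 * t = 2 * (r - 1 - t) + 1 := by omega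
            rw [hAB]
        _ = ∑ s ∈ Finset.range r, (j (2 * s + 1) : ℤ) :=
            Finset.sum_range_reflect (fun s => (j (2 * s + 1) : ℤ)) r
    have hcomb : ∑ s ∈ Finset.range (r + 1), (j (2 * s) : ℤ)
        + ∑ s ∈ Finset.range r, (j (2 * s + 1) : ℤ)
        = ∑ t ∈ Finset.range (2 * r + 1), (j t : ℤ) :=
      even_odd_sum (fun t => (j t : ℤ)) r
    have hglue : ∑ t ∈ Finset.range (2 * r + 1), (j t : ℤ)
        + ∑ u ∈ Finset.Ico (2 * r + 1) (2 * r + m), (j u : ℤ)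
        = ∑ t ∈ Finset.range (2 * r + m), (j t : ℤ) := by
      have h := Finset.sum_Ico_consecutive (fun t => (j t : ℤ))
        (Nat.zero_le (2 * r + 1)) (by omega : 2 * r + 1 ≤ 2 * r + m)
      simp only [Nat.Ico_zero_eq_range] at h
      exact h
    have hswap : ∑ t ∈ Finset.range (2 * r + m), (j t : ℤ)
        = ∑ t ∈ Finset.range (m + 2 * r), (j t : ℤ) := by
      have hmm : 2 * r + m = m + 2 * r := by ring
      rw [hmm]
    rw [hxi1, hxiA, hxiA2, hxiB, hetaA, hmaster]
    linarith [hcomb, hglue, hswap]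
end
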